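/- arXiv:0808.1238 — 11 statements merged into one kernel-verified Lean document; each statement's English description precedes it below -/
import Mathlib

section
/- Let σ be a finite type, let n ≥ 1, and for each i : Fin n let F_i : (Fin n → σ) → (Fin n → σ) be an arbitrary map. Suppose the family (F_i) is ω-independent, i.e. there is a set P ⊆ (Fin n → σ) such that Per([F,ω]) = P for every fair update order ω. Then F_i '' P = P for every i : Fin n; in particular each F_i restricts to a permutation of P. -/
/-!
Updating the coordinate `i` once more at the end or at the beginning of the fair order
`0, 1, …, n - 1` gives the fair orders with SDS maps `F i ∘ g` and `g ∘ F i`, where `g` is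
the SDS map of `0, 1, …, n - 1`. For any maps `f : α → β` and `g : β → α`, `f` carries the
periodic points of `g ∘ f` onto those of `f ∘ g`; by ω-independence both sets are `P`.
-/

open Function Set

namespace Function

theorem image_periodicPts_comp {α β : Type*} (f : α → β) (g : β → α) :
    f '' periodicPts (g ∘ f) = periodicPts (f ∘ g) := by
  refine Subset.antisymm (Semiconj.mapsTo_periodicPts (g := f) fun _ => rfl).image_subset ?_
  intro y hy
  obtain ⟨z, hz, rfl⟩ := (bijOn_periodicPts (f ∘ g)).surjOn hy
  exact ⟨g z, Semiconj.mapsTo_periodicPts (g := g) (fun _ => rfl) hz, rfl⟩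

end Function

section SDS

variable {ι α : Type*}

/-- The SDS map `[F, ω] = F ω_m ∘ ⋯ ∘ F ω_1`. -/
def sdsMap (F : ι → α → α) (ω : List ι) : α → α :=
  fun z => ω.foldl (fun s j => F j s) z

theorem sdsMap_append_singleton (F : ι → α → α) (ω : List ι) (i : ι) :
    sdsMap F (ω ++ [i]) = F i ∘ sdsMap F ω := by
  funext z
  simp [sdsMap, List.foldl_append]

theorem sdsMap_cons (F : ι → α → α) (ω : List ι) (i : ι) :
    sdsMap F (i :: ω) = sdsMap F ω ∘ F i :=
  rfl

end SDS

theorem stmt_0_general {σ : Type*} {n : ℕ}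
    (F : Fin n → (Fin n → σ) → (Fin n → σ))
    (P : Set (Fin n → σ))
    (hP : ∀ ω : List (Fin n), (∀ i : Fin n, i ∈ ω) →
      {y : Fin n → σ | ∃ k : ℕ, 1 ≤ k ∧
        (fun z : Fin n → σ => ω.foldl (fun s j => F j s) z)^[k] y = y} = P)
    (i : Fin n) : F i '' P = P := by
  have hper : ∀ ω : List (Fin n), (∀ j, j ∈ ω) → periodicPts (sdsMap F ω) = P := hP
  calc F i '' P = F i '' periodicPts (sdsMap F (i :: List.finRange n)) := by
        rw [hper _ fun j => List.mem_cons_of_mem _ (List.mem_finRange j)]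
    _ = periodicPts (sdsMap F (List.finRange n ++ [i])) := by
        rw [sdsMap_cons, sdsMap_append_singleton, image_periodicPts_comp]
    _ = P := hper _ fun j => List.mem_append_left _ (List.mem_finRange j)

/-- If the family `F` is ω-independent with common periodic set `P`
(for every fair update order the periodic set of the SDS map is `P`), then each
local function maps `P` onto `P`, i.e. `F i '' P = P`. -/
theorem stmt_0 {σ : Type*} [Fintype σ] {n : ℕ} (hn : 1 ≤ n)
    (F : Fin n → (Fin n → σ) → (Fin n → σ))
    (P : Set (Fin n → σ))
    (hP : ∀ ω : List (Fin n), (∀ i : Fin n, i ∈ ω) →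
      {y : Fin n → σ | ∃ k : ℕ, 1 ≤ k ∧
        (fun z : Fin n → σ => ω.foldl (fun s j => F j s) z)^[k] y = y} = P)
    (i : Fin n) : F i '' P = P :=
  stmt_0_general F P hP i
end

section
/- Let n ≥ 1, let i : Fin n, let P be a set of states, and let F : (Fin n → ZMod 2) → (Fin n → ZMod 2) be a map that is local at i. If F maps P bijectively onto P, then F(F(y)) = y for every y ∈ P; that is, the restriction of F to P is either the identity or an involution. -/
/-! A map local at `i` can only flip the `i`-th bit. If `F y ≠ y`, then `F` flips that bit of `y`;
by injectivity on `P` it cannot fix `F y`, so it flips the bit back and `F (F y) = y`. -/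

def IsLocalAt {ι β : Type*} (F : (ι → β) → ι → β) (i : ι) : Prop :=
  ∀ (y : ι → β) (j : ι), j ≠ i → F y j = y j

theorem ZMod.two_eq_of_ne_of_ne {a b c : ZMod 2} (hab : a ≠ b) (hbc : b ≠ c) : a = c := by
  revert a b c; decide

namespace IsLocalAt

variable {ι β : Type*} {F : (ι → β) → ι → β} {i : ι}

theorem apply_eq_iff (hF : IsLocalAt F i) {y z : ι → β} (hz : ∀ j, j ≠ i → z j = y j) :
    F y = z ↔ F y i = z i := by
  refine ⟨fun h => h ▸ rfl, fun h => funext fun j => ?_⟩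
  by_cases hj : j = i
  · exact hj ▸ h
  · rw [hF y j hj, hz j hj]

theorem apply_apply_eq_of_injOn {F : (ι → ZMod 2) → ι → ZMod 2} (hF : IsLocalAt F i)
    {P : Set (ι → ZMod 2)} (hinj : P.InjOn F) (hmaps : P.MapsTo F P) {y : ι → ZMod 2}
    (hy : y ∈ P) : F (F y) = y := by
  by_cases hfix : F y i = y i
  · rw [(hF.apply_eq_iff fun _ _ => rfl).2 hfix, (hF.apply_eq_iff fun _ _ => rfl).2 hfix]
  · have hmove : F (F y) i ≠ F y i := fun h =>
      hfix (congrFun (hinj (hmaps hy) hy ((hF.apply_eq_iff fun _ _ => rfl).2 h)) i)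
    exact (hF.apply_eq_iff fun j hj => (hF y j hj).symm).2
      (ZMod.two_eq_of_ne_of_ne hmove hfix)

end IsLocalAt

theorem stmt_2_general {n : ℕ} (i : Fin n) (P : Set (Fin n → ZMod 2))
    (F : (Fin n → ZMod 2) → (Fin n → ZMod 2))
    (hlocal : ∀ (y : Fin n → ZMod 2) (j : Fin n), j ≠ i → F y j = y j)
    (hbij : Set.BijOn F P P) :
    ∀ y ∈ P, F (F y) = y :=
  fun _ hy => IsLocalAt.apply_apply_eq_of_injOn hlocal hbij.injOn hbij.mapsTo hy

/-- If `F` is local at `i` (over the two-element state space `ZMod 2`)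
and maps `P` bijectively onto `P`, then `F ∘ F` is the identity on `P`. -/
theorem stmt_2 {n : ℕ} (hn : 1 ≤ n) (i : Fin n) (P : Set (Fin n → ZMod 2))
    (F : (Fin n → ZMod 2) → (Fin n → ZMod 2))
    (hlocal : ∀ (y : Fin n → ZMod 2) (j : Fin n), j ≠ i → F y j = y j)
    (hbij : Set.BijOn F P P) :
    ∀ y ∈ P, F (F y) = y :=
  stmt_2_general i P F hlocal hbij
end

section
/- Fix n > 3. For each i : Fin n let S_i be the permutation of states (Fin n → ZMod 2) that replaces y_i by y_i + 1 when (y_{i−1}, y_{i+1}) = (1, 0) and leaves the state unchanged otherwise (the Wolfram rule 156 local function at i). Let G₁₅₆ be the subgroup of the permutation group of (Fin n → ZMod 2) generated by {S_i ∣ i : Fin n}. Then every orbit of G₁₅₆ on (Fin n → ZMod 2) contains exactly one state that either is the all-ones state or lies in N_A; consequently the number of orbits equals (fib(n+1) + fib(n−1)) + 1, i.e. the n-th Lucas number plus one. -/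
/-!
A generator `S i` can only change cell `i` when `y (i - 1) = 1` and `y (i + 1) = 0`, i.e. it
switches the last cell of a block of ones off, or back on. It never changes which cells start a
block, so the state `blockHeads y` of block starts is an orbit invariant, and it is the identity on
`N_A`. Switching block ends off one at a time brings every state other than the all-ones state
into `N_A`, while the all-ones state is fixed by every generator. Hence each orbit has exactly one
representative in `N_A ∪ {1}`. Cutting the cycle at cell `0` counts `N_A`: a `0` there leaves a
free path of length `n - 1`, a `1` forces both neighbours to `0` and leaves a path of length
`n - 3`, and paths with no two adjacent ones are counted by Fibonacci numbers.
-/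

open Finset

theorem ZMod.sum_univ_two {M : Type*} [AddCommMonoid M] (f : ZMod 2 → M) :
    ∑ a, f a = f 0 + f 1 :=
  Fin.sum_univ_two f

theorem Fin.card_filter_cons {α : Type*} [Fintype α] [DecidableEq α] {k : ℕ}
    (R : (Fin (k + 1) → α) → Prop) [DecidablePred R] :
    #{f | R f} = ∑ a, #{g : Fin k → α | R (Fin.cons a g)} := by
  simp only [card_filter, ← (Fin.consEquiv fun _ => α).sum_comp, Fintype.sum_prod_type]
  rfl

theorem Nat.eq_fib_add_of_recurrence {u : ℕ → ℕ} (k : ℕ) (h0 : u 0 = fib k)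
    (h1 : u 1 = fib (k + 1)) (h : ∀ m, u (m + 2) = u (m + 1) + u m) :
    ∀ m, u m = fib (m + k)
  | 0 => by rw [h0, zero_add]
  | 1 => by rw [h1, add_comm]
  | m + 2 => by
    rw [h, eq_fib_add_of_recurrence k h0 h1 h (m + 1), eq_fib_add_of_recurrence k h0 h1 h m,
      show m + 2 + k = m + k + 2 by ring, fib_add_two, add_comm, show m + 1 + k = m + k + 1 by ring]

theorem Subgroup.apply_eq_of_mem_closure {X Y : Type*} {s : Set (Equiv.Perm X)} (f : X → Y)
    (hs : ∀ σ ∈ s, ∀ x, f (σ x) = f x) {g : Equiv.Perm X} (hg : g ∈ closure s) (x : X) :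
    f (g x) = f x := by
  induction hg using closure_induction generalizing x with
  | mem σ hσ => exact hs σ hσ x
  | one => rfl
  | mul g h _ _ hg hh => rw [Equiv.Perm.mul_apply, hg, hh]
  | inv g _ hg => rw [← hg (g⁻¹ x), Equiv.Perm.inv_def, Equiv.apply_symm_apply]

theorem Nat.card_quotient_eq_of_existsUnique {X : Type*} (s : Setoid X) (R : X → Prop)
    (h : ∀ x, ∃! z, s z x ∧ R z) : Nat.card (Quotient s) = Nat.card {z // R z} := by
  refine (card_eq_of_bijective (fun z : {z // R z} => (⟦z.1⟧ : Quotient s)) ⟨?_, ?_⟩).symm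
  · rintro ⟨z, hz⟩ ⟨w, hw⟩ hzw
    exact Subtype.ext ((h w).unique ⟨Quotient.exact hzw, hz⟩ ⟨s.refl w, hw⟩)
  · refine Quotient.ind fun x => ?_
    obtain ⟨z, ⟨hzx, hz⟩, -⟩ := h x
    exact ⟨⟨z, hz⟩, Quotient.sound hzx⟩

def NoAdjOnes {m : ℕ} (f : Fin (m + 1) → ZMod 2) : Prop :=
  ∀ i : Fin m, ¬(f i.castSucc = 1 ∧ f i.succ = 1)

instance {m : ℕ} : DecidablePred (NoAdjOnes (m := m)) :=
  fun _ => inferInstanceAs (Decidable (∀ _, _))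

theorem noAdjOnes_cons {m : ℕ} (a : ZMod 2) (g : Fin (m + 1) → ZMod 2) :
    NoAdjOnes (Fin.cons a g : Fin (m + 2) → ZMod 2) ↔
      ¬(a = 1 ∧ g 0 = 1) ∧ NoAdjOnes g := by
  simp only [NoAdjOnes, Fin.forall_fin_succ, Fin.castSucc_zero, Fin.cons_zero,
    ← Fin.succ_castSucc, Fin.cons_succ]

section LastCell

variable (Q : ZMod 2 → Prop) [DecidablePred Q]

theorem card_noAdjOnes_head_ne_one (m : ℕ) :
    #{f : Fin (m + 2) → ZMod 2 | f 0 ≠ 1 ∧ NoAdjOnes f ∧ Q (f (Fin.last _))} =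
      #{g : Fin (m + 1) → ZMod 2 | NoAdjOnes g ∧ Q (g (Fin.last _))} := by
  rw [Fin.card_filter_cons, ZMod.sum_univ_two]
  simp [noAdjOnes_cons, Fin.cons_last]

theorem card_noAdjOnes_add_three (m : ℕ) :
    #{f : Fin (m + 3) → ZMod 2 | NoAdjOnes f ∧ Q (f (Fin.last _))} =
      #{g : Fin (m + 2) → ZMod 2 | NoAdjOnes g ∧ Q (g (Fin.last _))} +
      #{g : Fin (m + 1) → ZMod 2 | NoAdjOnes g ∧ Q (g (Fin.last _))} := by
  rw [Fin.card_filter_cons, ZMod.sum_univ_two, ← card_noAdjOnes_head_ne_one Q m]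
  simp [noAdjOnes_cons, Fin.cons_last, and_assoc]

end LastCell

theorem card_noAdjOnes (m : ℕ) :
    #{f : Fin (m + 1) → ZMod 2 | NoAdjOnes f} = Nat.fib (m + 3) := by
  have key := Nat.eq_fib_add_of_recurrence
    (u := fun m => #{f : Fin (m + 1) → ZMod 2 | NoAdjOnes f ∧ True}) 3 (by decide) (by decide)
    (card_noAdjOnes_add_three (fun _ => True)) m
  simpa only [and_true] using key

theorem card_noAdjOnes_last_ne_one (m : ℕ) :
    #{f : Fin (m + 1) → ZMod 2 | NoAdjOnes f ∧ f (Fin.last m) ≠ 1} = Nat.fib (m + 2) :=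
  Nat.eq_fib_add_of_recurrence
    (u := fun m => #{f : Fin (m + 1) → ZMod 2 | NoAdjOnes f ∧ f (Fin.last m) ≠ 1})
    2 (by decide) (by decide) (card_noAdjOnes_add_three (· ≠ 1)) m

section Cyclic

variable {n : ℕ} [NeZero n]

def CyclicNoAdjOnes (z : Fin n → ZMod 2) : Prop :=
  ∀ i, ¬(z i = 1 ∧ z (i + 1) = 1)

instance : DecidablePred (CyclicNoAdjOnes (n := n)) :=
  fun _ => inferInstanceAs (Decidable (∀ _, _))

theorem cyclicNoAdjOnes_iff {m : ℕ} (z : Fin (m + 1) → ZMod 2) :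
    CyclicNoAdjOnes z ↔ NoAdjOnes z ∧ ¬(z (Fin.last m) = 1 ∧ z 0 = 1) := by
  simp only [CyclicNoAdjOnes, Fin.forall_fin_succ', Fin.coeSucc_eq_succ, Fin.last_add_one]
  rfl

theorem card_cyclicNoAdjOnes_add_two (m : ℕ) :
    #{z : Fin (m + 2) → ZMod 2 | CyclicNoAdjOnes z} = Nat.fib (m + 3) + Nat.fib (m + 1) := by
  rw [Fin.card_filter_cons, ZMod.sum_univ_two, ← card_noAdjOnes]
  simp only [cyclicNoAdjOnes_iff, noAdjOnes_cons, Fin.cons_last, Fin.cons_zero, and_assoc]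
  cases m with
  | zero => decide
  | succ m => simp [card_noAdjOnes_head_ne_one (· ≠ 1), card_noAdjOnes_last_ne_one]

theorem card_cyclicNoAdjOnes :
    #{z : Fin n → ZMod 2 | CyclicNoAdjOnes z} = Nat.fib (n + 1) + Nat.fib (n - 1) := by
  obtain ⟨m, rfl⟩ := Nat.exists_eq_succ_of_ne_zero (NeZero.ne n)
  cases m with
  | zero => rfl
  | succ m => exact card_cyclicNoAdjOnes_add_two m

theorem card_eq_one_or_cyclicNoAdjOnes :
    Nat.card {z : Fin n → ZMod 2 // z = (fun _ => 1) ∨ CyclicNoAdjOnes z} =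
      Nat.fib (n + 1) + Nat.fib (n - 1) + 1 := by
  classical
  rw [Nat.card_eq_fintype_card, Fintype.card_subtype, filter_or, filter_eq', if_pos (mem_univ _),
    ← insert_eq, card_insert_of_notMem, card_cyclicNoAdjOnes]
  exact fun h => (mem_filter.1 h).2 0 ⟨rfl, rfl⟩

def blockHeads (y : Fin n → ZMod 2) : Fin n → ZMod 2 :=
  fun i => if y (i - 1) = 0 ∧ y i = 1 then 1 else 0

theorem blockHeads_update (y : Fin n → ZMod 2) (j : Fin n) (c : ZMod 2)
    (hprev : y (j - 1) = 1) (hnext : y (j + 1) = 0) :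
    blockHeads (Function.update y j c) = blockHeads y := by
  have hne : j + 1 ≠ j - 1 := fun h => by simp [h, hprev] at hnext
  funext i
  simp only [blockHeads, Function.update_apply]
  split_ifs <;> grind

theorem blockHeads_eq_self {z : Fin n → ZMod 2} (hz : CyclicNoAdjOnes z) : blockHeads z = z := by
  funext i
  have := hz (i - 1)
  rw [sub_add_cancel] at this
  simp only [blockHeads]
  generalize z (i - 1) = a, z i = b at *
  revert a b
  decide

open Fin.NatCast in
theorem exists_blockEnd_of_not_cyclicNoAdjOnes {y : Fin n → ZMod 2} (hy : y ≠ fun _ => 1)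
    (hA : ¬CyclicNoAdjOnes y) : ∃ j, y (j - 1) = 1 ∧ y j = 1 ∧ y (j + 1) = 0 := by
  by_contra! h
  obtain ⟨i, hi⟩ : ∃ i, y i = 1 ∧ y (i + 1) = 1 := by simpa [CyclicNoAdjOnes] using hA
  have run : ∀ t : ℕ, y (i + (t : Fin n)) = 1 ∧ y (i + (t : Fin n) + 1) = 1 := by
    intro t
    induction t with
    | zero => simpa using hi
    | succ t ih =>
      refine ⟨by simpa [add_assoc] using ih.2, ?_⟩
      rw [Nat.cast_succ, ← add_assoc]
      exact Fin.eq_one_of_ne_zero _ (h _ (by simpa using ih.1) ih.2)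
  exact hy (funext fun k => by simpa using (run (k - i).val).1)

section Rule156

variable (S : Fin n → Equiv.Perm (Fin n → ZMod 2))
  (hS : ∀ (i : Fin n) (y : Fin n → ZMod 2),
    S i y = if y (i - 1) = 1 ∧ y (i + 1) = 0 then Function.update y i (y i + 1) else y)

local notation "G" => Subgroup.closure (Set.range S)

include hS

theorem blockHeads_eq_of_mem_orbit {y z : Fin n → ZMod 2} (hz : z ∈ MulAction.orbit G y) :
    blockHeads z = blockHeads y := by
  obtain ⟨⟨g, hg⟩, rfl⟩ := hz
  refine Subgroup.apply_eq_of_mem_closure blockHeads ?_ hg y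
  rintro _ ⟨i, rfl⟩ x
  rw [hS]
  split_ifs with h
  exacts [blockHeads_update x i _ h.1 h.2, rfl]

theorem eq_one_of_mem_orbit_one {z : Fin n → ZMod 2}
    (hz : z ∈ MulAction.orbit G (fun _ => 1 : Fin n → ZMod 2)) : z = fun _ => 1 := by
  obtain ⟨⟨g, hg⟩, rfl⟩ := hz
  have hle : G ≤ MulAction.stabilizer _ (fun _ => 1 : Fin n → ZMod 2) := by
    rw [Subgroup.closure_le]
    rintro _ ⟨i, rfl⟩
    rw [SetLike.mem_coe, MulAction.mem_stabilizer_iff, Equiv.Perm.smul_def, hS, if_neg]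
    simp
  exact hle hg

theorem exists_mem_orbit_cyclicNoAdjOnes {y : Fin n → ZMod 2} (hy : y ≠ fun _ => 1) :
    ∃ z ∈ MulAction.orbit G y, CyclicNoAdjOnes z := by
  induction hk : #{i | y i = 1} using Nat.strong_induction_on generalizing y with
  | _ k ih =>
    by_cases hA : CyclicNoAdjOnes y
    · exact ⟨y, MulAction.mem_orbit_self y, hA⟩
    obtain ⟨j, hprev, hj, hnext⟩ := exists_blockEnd_of_not_cyclicNoAdjOnes hy hA
    have hSj : S j y = Function.update y j 0 := by
      rw [hS, if_pos ⟨hprev, hnext⟩, hj]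
      rfl
    have hfewer : #{i | Function.update y j 0 i = 1} < k := by
      rw [← hk]
      refine card_lt_card (ssubset_iff_of_subset ?_ |>.2 ⟨j, by simpa using hj, by simp⟩)
      intro i
      simp only [mem_filter, mem_univ, true_and, Function.update_apply]
      split_ifs <;> simp_all
    obtain ⟨z, hz, hzA⟩ :=
      ih _ hfewer (y := Function.update y j 0) (by simpa using congrFun · j) rfl
    refine ⟨z, ?_, hzA⟩
    rwa [← hSj, show S j y = (⟨S j, Subgroup.subset_closure ⟨j, rfl⟩⟩ : G) • y from rfl,
      MulAction.orbit_smul] at hz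

theorem existsUnique_mem_orbit (y : Fin n → ZMod 2) :
    ∃! z, z ∈ MulAction.orbit G y ∧ (z = (fun _ => 1) ∨ CyclicNoAdjOnes z) := by
  by_cases hy : y = fun _ => 1
  · subst hy
    exact ⟨_, ⟨MulAction.mem_orbit_self _, Or.inl rfl⟩,
      fun z hz => eq_one_of_mem_orbit_one S hS hz.1⟩
  obtain ⟨z, hz, hzA⟩ := exists_mem_orbit_cyclicNoAdjOnes S hS hy
  refine ⟨z, ⟨hz, Or.inr hzA⟩, ?_⟩
  rintro w ⟨hw, rfl | hwA⟩
  · exact (hy (eq_one_of_mem_orbit_one S hS (MulAction.mem_orbit_symm.1 hw))).elim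
  · rw [← blockHeads_eq_self hwA, ← blockHeads_eq_self hzA, blockHeads_eq_of_mem_orbit S hS hw,
      blockHeads_eq_of_mem_orbit S hS hz]

end Rule156

end Cyclic

theorem stmt_10_general {n : ℕ} [NeZero n]
    (S : Fin n → Equiv.Perm (Fin n → ZMod 2))
    (hS : ∀ (i : Fin n) (y : Fin n → ZMod 2),
      S i y = if y (i - 1) = 1 ∧ y (i + 1) = 0
        then Function.update y i (y i + 1) else y) :
    (∀ y : Fin n → ZMod 2, ∃! z : Fin n → ZMod 2,
      z ∈ MulAction.orbit ↥(Subgroup.closure (Set.range S)) y ∧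
        (z = (fun _ => 1) ∨ ∀ i : Fin n, ¬(z i = 1 ∧ z (i + 1) = 1))) ∧
    Nat.card (Quotient (MulAction.orbitRel
        ↥(Subgroup.closure (Set.range S)) (Fin n → ZMod 2)))
      = (Nat.fib (n + 1) + Nat.fib (n - 1)) + 1 :=
  ⟨existsUnique_mem_orbit S hS,
    (Nat.card_quotient_eq_of_existsUnique _ _ (existsUnique_mem_orbit S hS)).trans
      card_eq_one_or_cyclicNoAdjOnes⟩

/-- For Wolfram rule 156, every orbit of the dynamics group contains
exactly one state that is either the all-ones state or lies in `N_A` (no two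
cyclically adjacent 1s); hence the number of orbits is the `n`-th Lucas number
plus one. -/
theorem stmt_10 {n : ℕ} [NeZero n] (hn : 3 < n)
    (S : Fin n → Equiv.Perm (Fin n → ZMod 2))
    (hS : ∀ (i : Fin n) (y : Fin n → ZMod 2),
      S i y = if y (i - 1) = 1 ∧ y (i + 1) = 0
        then Function.update y i (y i + 1) else y) :
    (∀ y : Fin n → ZMod 2, ∃! z : Fin n → ZMod 2,
      z ∈ MulAction.orbit ↥(Subgroup.closure (Set.range S)) y ∧
        (z = (fun _ => 1) ∨ ∀ i : Fin n, ¬(z i = 1 ∧ z (i + 1) = 1))) ∧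
    Nat.card (Quotient (MulAction.orbitRel
        ↥(Subgroup.closure (Set.range S)) (Fin n → ZMod 2)))
      = (Nat.fib (n + 1) + Nat.fib (n - 1)) + 1 :=
  stmt_10_general S hS
end

section
/- Fix n > 3. For each i : Fin n let T_i be the map on states (Fin n → ZMod 2) that replaces y_i by y_i + 1 when y_{i−1} = y_{i+1} = 0 and leaves the state unchanged otherwise (the Wolfram rule 201 local function at i). Then T_i maps N_A bijectively onto itself, the number of states y ∈ N_A with T_i(y) ≠ y equals 2·fib(n−1), and the sign of the permutation of N_A induced by T_i equals (−1)^{fib(n−1)}. In particular, when fib(n−1) is even, every element of the subgroup LG_n of the permutation group of N_A generated by these restrictions is an even permutation. -/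
/-!
Each `T i` is an involution of `N_A`, so its sign is `(-1) ^ (k / 2)` where `k` is the number of
states it moves. A state of `N_A` is moved exactly when `y (i - 1) = y (i + 1) = 0`; then `y i` is
free and the remaining `n - 3` cells form a path with no two adjacent `1`s, and such paths of
length `l` are counted by `fib (l + 2)`. Hence `k = 2 * fib (n - 1)`. When `fib (n - 1)` is even
all generators are even permutations, hence so is every element of the group they generate.
-/

open Finset

def IsPathIndependent {m : ℕ} (y : Fin (m + 1) → ZMod 2) : Prop :=
  ∀ k : Fin m, ¬(y k.castSucc = 1 ∧ y k.succ = 1)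

instance {m : ℕ} : DecidablePred (IsPathIndependent (m := m)) :=
  fun _ => inferInstanceAs (Decidable (∀ _, _))

def IsCycleIndependent {n : ℕ} [NeZero n] (y : Fin n → ZMod 2) : Prop :=
  ∀ i, ¬(y i = 1 ∧ y (i + 1) = 1)

instance {n : ℕ} [NeZero n] : DecidablePred (IsCycleIndependent (n := n)) :=
  fun _ => inferInstanceAs (Decidable (∀ _, _))

theorem isPathIndependent_cons {m : ℕ} (a : ZMod 2) (y : Fin (m + 1) → ZMod 2) :
    IsPathIndependent (Fin.cons a y : Fin (m + 2) → ZMod 2) ↔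
      ¬(a = 1 ∧ y 0 = 1) ∧ IsPathIndependent y := by
  simp only [IsPathIndependent, Fin.forall_fin_succ]
  simp

theorem isCycleIndependent_iff {m : ℕ} (y : Fin (m + 1) → ZMod 2) :
    IsCycleIndependent y ↔ IsPathIndependent y ∧ ¬(y (Fin.last m) = 1 ∧ y 0 = 1) := by
  simp only [IsCycleIndependent, IsPathIndependent, Fin.forall_fin_succ', Fin.coeSucc_eq_succ,
    Fin.last_add_one]

theorem isCycleIndependent_comp_addRight {n : ℕ} [NeZero n] (y : Fin n → ZMod 2) (c : Fin n) :
    IsCycleIndependent (y ∘ Equiv.addRight c) ↔ IsCycleIndependent y := by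
  simp only [IsCycleIndependent, Function.comp_apply, Equiv.coe_addRight, add_right_comm _ 1 c]
  exact (Equiv.addRight c).forall_congr (by simp)

theorem card_filter_fin_cons {α : Type*} [Fintype α] {k : ℕ} (Q : (Fin (k + 1) → α) → Prop)
    [DecidablePred Q] : #{y | Q y} = ∑ a, #{z : Fin k → α | Q (Fin.cons a z)} := by
  simp only [card_filter]
  rw [← (Fin.consEquiv fun _ => α).sum_comp, Fintype.sum_prod_type]
  rfl

theorem card_filter_comp_equiv {ι α : Type*} [Fintype ι] [DecidableEq ι] [Fintype α]
    [DecidableEq α] (e : ι ≃ ι) (Q : (ι → α) → Prop) [DecidablePred Q] :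
    #{y : ι → α | Q (y ∘ e)} = #{y | Q y} := by
  simp only [card_filter]
  exact (e.arrowCongr (Equiv.refl α)).symm.sum_comp (fun y => if Q y then 1 else 0)

theorem card_pathIndependent_add_two (m : ℕ) :
    #{y : Fin (m + 3) → ZMod 2 | IsPathIndependent y} =
      #{y : Fin (m + 2) → ZMod 2 | IsPathIndependent y} +
        #{y : Fin (m + 1) → ZMod 2 | IsPathIndependent y} := by
  rw [card_filter_fin_cons, ZMod.sum_univ_two]
  simp only [isPathIndependent_cons, zero_ne_one, false_and, not_false_eq_true, true_and]
  congr 1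
  rw [card_filter_fin_cons, ZMod.sum_univ_two]
  simp [isPathIndependent_cons]

theorem card_pathIndependent (m : ℕ) :
    #{y : Fin (m + 1) → ZMod 2 | IsPathIndependent y} = Nat.fib (m + 3) := by
  induction m using Nat.twoStepInduction with
  | zero => decide
  | one => decide
  | more m ih₀ ih₁ =>
    rw [card_pathIndependent_add_two, ih₀, ih₁, Nat.fib_add_two (n := m + 3), add_comm]

theorem card_pathIndependent_head_zero (m : ℕ) :
    #{y : Fin (m + 2) → ZMod 2 | IsPathIndependent y ∧ y 0 = 0} = Nat.fib (m + 3) := by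
  rw [card_filter_fin_cons, ZMod.sum_univ_two]
  simp [isPathIndependent_cons, card_pathIndependent]

theorem card_isCycleIndependent_zero_two (m : ℕ) :
    #{y : Fin (m + 4) → ZMod 2 | IsCycleIndependent y ∧ y 0 = 0 ∧ y 2 = 0} =
      2 * Nat.fib (m + 3) := by
  -- `y 0 = 0` discharges the wrap-around condition, `y 1` is free and `y 2 = 0` starts a path.
  simp only [isCycleIndependent_iff, ← Fin.succ_one_eq_two']
  rw [card_filter_fin_cons, ZMod.sum_univ_two]
  simp only [Fin.cons_last, Fin.cons_zero, Fin.cons_succ, isPathIndependent_cons, zero_ne_one,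
    one_ne_zero, false_and, and_false, not_false_eq_true, true_and,
    and_true, filter_false, card_empty, add_zero]
  rw [card_filter_fin_cons, ZMod.sum_univ_two]
  have head_zero (x : Fin (m + 2) → ZMod 2) :
      (¬x 0 = 1 ∧ IsPathIndependent x) ∧ x 0 = 0 ↔ IsPathIndependent x ∧ x 0 = 0 :=
    and_congr_left fun h => by simp [h]
  simp [isPathIndependent_cons, card_pathIndependent_head_zero, head_zero, two_mul]

theorem card_isCycleIndependent_pred_succ (m : ℕ) (i : Fin (m + 4)) :
    #{y : Fin (m + 4) → ZMod 2 | IsCycleIndependent y ∧ y (i - 1) = 0 ∧ y (i + 1) = 0} =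
      2 * Nat.fib (m + 3) := by
  rw [← card_isCycleIndependent_zero_two, ← card_filter_comp_equiv (Equiv.addRight (i - 1))
    (fun y => IsCycleIndependent y ∧ y 0 = 0 ∧ y 2 = 0)]
  congr 1
  refine filter_congr fun y _ => ?_
  rw [isCycleIndependent_comp_addRight]
  simp only [Function.comp_apply, Equiv.coe_addRight, zero_add,
    show (2 : Fin (m + 4)) + (i - 1) = i + 1 by open Fin.CommRing in ring]

theorem Fin.one_ne_zero_of_one_lt {n : ℕ} [NeZero n] (hn : 1 < n) : (1 : Fin n) ≠ 0 := by
  simp [Fin.ext_iff, Nat.mod_eq_of_lt hn]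

theorem IsCycleIndependent.update {n : ℕ} [NeZero n] (hn : 1 < n) {y : Fin n → ZMod 2}
    (hy : IsCycleIndependent y) {i : Fin n} (hpred : y (i - 1) = 0) (hsucc : y (i + 1) = 0)
    (a : ZMod 2) : IsCycleIndependent (Function.update y i a) := by
  have h1 := Fin.one_ne_zero_of_one_lt hn
  intro j
  rcases eq_or_ne j i with rfl | hj
  · rw [Function.update_of_ne (add_ne_left.mpr h1), hsucc]
    simp
  rcases eq_or_ne (j + 1) i with hj1 | hj1
  · rw [Function.update_of_ne hj, eq_sub_of_add_eq hj1, hpred]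
    simp
  · rw [Function.update_of_ne hj, Function.update_of_ne hj1]
    exact hy j

def rule201 {n : ℕ} [NeZero n] (i : Fin n) (y : Fin n → ZMod 2) : Fin n → ZMod 2 :=
  if y (i - 1) = 0 ∧ y (i + 1) = 0 then Function.update y i (y i + 1) else y

theorem rule201_ne_self_iff {n : ℕ} [NeZero n] (i : Fin n) (y : Fin n → ZMod 2) :
    rule201 i y ≠ y ↔ y (i - 1) = 0 ∧ y (i + 1) = 0 := by
  unfold rule201
  split_ifs with h <;> simp [h, Function.update_eq_self_iff]

theorem rule201_involutive {n : ℕ} [NeZero n] (hn : 1 < n) (i : Fin n) :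
    Function.Involutive (rule201 i) := by
  have h1 := Fin.one_ne_zero_of_one_lt hn
  intro y
  by_cases h : y (i - 1) = 0 ∧ y (i + 1) = 0
  · have hflip : rule201 i y = Function.update y i (y i + 1) := if_pos h
    have h' : Function.update y i (y i + 1) (i - 1) = 0 ∧
        Function.update y i (y i + 1) (i + 1) = 0 := by
      rwa [Function.update_of_ne (mt sub_eq_self.mp h1), Function.update_of_ne (add_ne_left.mpr h1)]
    rw [hflip, rule201, if_pos h', Function.update_idem, Function.update_self, add_assoc,
      CharTwo.add_self_eq_zero, add_zero, Function.update_eq_self]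
  · simp only [rule201, if_neg h]

theorem IsCycleIndependent.rule201 {n : ℕ} [NeZero n] (hn : 1 < n) {y : Fin n → ZMod 2}
    (hy : IsCycleIndependent y) (i : Fin n) : IsCycleIndependent (rule201 i y) := by
  unfold _root_.rule201
  split_ifs with h
  · exact hy.update hn h.1 h.2 _
  · exact hy

theorem Equiv.Perm.sign_of_sq_eq_one {α : Type*} [Fintype α] [DecidableEq α] {σ : Perm α}
    (hσ : σ ^ 2 = 1) :
    sign σ = (-1) ^ (#σ.support / 2) := by
  rw [sign_of_pow_two_eq_one hσ, card_fixedPoints, sum_cycleType,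
    Nat.sub_sub_self (card_le_univ _)]

theorem Equiv.Perm.card_support_of_forall_coe_eq {α : Type*} [DecidableEq α] {s : Finset α}
    [Fintype s] {f : α → α} (e : Perm s) (he : ∀ x, (e x : α) = f x) :
    #e.support = #{x ∈ s | f x ≠ x} := by
  have hsupp : e.support = s.attach.filter fun x : s => f x ≠ x := by
    ext x
    simp [Subtype.ext_iff, he]
  rw [hsupp, filter_attach (fun x => f x ≠ x), card_map, card_attach]

theorem Equiv.Perm.sign_of_forall_coe_eq_involutive {α : Type*} [DecidableEq α] {s : Finset α}
    [Fintype s] {f : α → α} (hf : Function.Involutive f) (e : Perm s)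
    (he : ∀ x, (e x : α) = f x) :
    sign e = (-1) ^ (#{x ∈ s | f x ≠ x} / 2) := by
  have hsq : e ^ 2 = 1 := by
    ext x
    simp [sq, he, hf x]
  rw [sign_of_sq_eq_one hsq, card_support_of_forall_coe_eq e he]

/-- For Wolfram rule 201 (flip `y i` when both neighbors are 0),
each local function maps `N_A` bijectively to itself, moves exactly
`2 * fib (n-1)` states of `N_A`, and the induced permutation of `N_A` has sign
`(-1)^(fib (n-1))`; hence when `fib (n-1)` is even, every element of the group
generated by these restrictions is an even permutation. -/
theorem stmt_11 {n : ℕ} [NeZero n] (hn : 3 < n)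
    (T : Fin n → (Fin n → ZMod 2) → (Fin n → ZMod 2))
    (hT : ∀ (i : Fin n) (y : Fin n → ZMod 2),
      T i y = if y (i - 1) = 0 ∧ y (i + 1) = 0
        then Function.update y i (y i + 1) else y)
    (NA : Finset (Fin n → ZMod 2))
    (hNA : ∀ y : Fin n → ZMod 2,
      y ∈ NA ↔ ∀ i : Fin n, ¬(y i = 1 ∧ y (i + 1) = 1)) :
    (∀ i : Fin n, Set.BijOn (T i) ↑NA ↑NA) ∧
    (∀ i : Fin n, (NA.filter fun y => T i y ≠ y).card = 2 * Nat.fib (n - 1)) ∧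
    (∀ (i : Fin n) (e : Equiv.Perm {y // y ∈ NA}),
      (∀ y : {y // y ∈ NA}, (e y : Fin n → ZMod 2) = T i (y : Fin n → ZMod 2)) →
      Equiv.Perm.sign e = (-1) ^ Nat.fib (n - 1)) ∧
    (Even (Nat.fib (n - 1)) →
      ∀ g ∈ Subgroup.closure {e : Equiv.Perm {y // y ∈ NA} |
          ∃ i : Fin n, ∀ y : {y // y ∈ NA},
            (e y : Fin n → ZMod 2) = T i (y : Fin n → ZMod 2)},
        Equiv.Perm.sign g = 1) := by
  obtain ⟨m, rfl⟩ : ∃ m, n = m + 4 := ⟨n - 4, by omega⟩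
  obtain rfl : T = rule201 := funext₂ hT
  rw [show m + 4 - 1 = m + 3 from rfl]
  have hNA' : NA = univ.filter IsCycleIndependent := by
    ext y
    simp [hNA, IsCycleIndependent]
  have hinv (i : Fin (m + 4)) : Function.Involutive (rule201 i) := rule201_involutive (by omega) i
  have hcard (i : Fin (m + 4)) : #{y ∈ NA | rule201 i y ≠ y} = 2 * Nat.fib (m + 3) := by
    simp only [hNA', filter_filter, rule201_ne_self_iff]
    exact card_isCycleIndependent_pred_succ m i
  have hsign (i : Fin (m + 4)) (e : Equiv.Perm {y // y ∈ NA})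
      (he : ∀ y : {y // y ∈ NA}, (e y : Fin (m + 4) → ZMod 2) = rule201 i y) :
      Equiv.Perm.sign e = (-1) ^ Nat.fib (m + 3) := by
    rw [Equiv.Perm.sign_of_forall_coe_eq_involutive (hinv i) e he, hcard,
      Nat.mul_div_cancel_left _ two_pos]
  refine ⟨fun i => ?_, hcard, hsign, fun heven g hg => ?_⟩
  · have hmaps : Set.MapsTo (rule201 i) NA NA := fun y hy => by
      simp only [hNA', coe_filter, mem_univ, true_and] at hy ⊢
      exact hy.rule201 (by omega) i
    exact Set.InvOn.bijOn ⟨fun y _ => hinv i y, fun y _ => hinv i y⟩ hmaps hmaps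
  · refine MonoidHom.mem_ker.mp ((Subgroup.closure_le _).mpr ?_ hg)
    rintro e ⟨i, he⟩
    exact MonoidHom.mem_ker.mpr ((hsign i e he).trans heven.neg_one_pow)
end

section
/- Fix n > 3. For each i : Fin n let U_i be the permutation of states (Fin n → ZMod 2) that leaves the state unchanged when (y_{i−1}, y_{i+1}) = (0, 1) and replaces y_i by y_i + 1 otherwise (the Wolfram rule 57 local function at i; each U_i is an involution). Then the subgroup of the permutation group of (Fin n → ZMod 2) generated by {U_i ∣ i : Fin n} acts transitively on (Fin n → ZMod 2), and for n > 4 each U_i is an even permutation of (Fin n → ZMod 2). -/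
/-!
Transitivity: from any state other than the all-ones state some generator turns a `0` into a `1`
(at a zero `i`, or at `i - 1` when `U i` is blocked), so every state is carried to the all-ones
state by descent on the number of zeros.

Evenness: for `n ≥ 4` there is a cell `d` outside `{i - 1, i, i + 1}`. `U i` neither reads nor
writes `y d`, so splitting off that coordinate turns `U i` into `id × τ` on
`ZMod 2 × (ZMod 2)^(n-1)`, whose sign is `sign τ ^ 2 = 1`.
-/

open Equiv Function Finset

theorem Equiv.Perm.exists_mem_closure_apply_eq_of_descent {α : Type*} {S : Set (Perm α)}
    (μ : α → ℕ) {b : α} (h : ∀ x, x ≠ b → ∃ g ∈ S, μ (g x) < μ x) (x : α) :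
    ∃ g ∈ Subgroup.closure S, g x = b := by
  by_cases hx : x = b
  · exact ⟨1, one_mem _, hx⟩
  obtain ⟨g, hgS, hlt⟩ := h x hx
  obtain ⟨g', hg', hg'x⟩ := exists_mem_closure_apply_eq_of_descent μ h (g x)
  exact ⟨g' * g, mul_mem hg' (Subgroup.subset_closure hgS), hg'x⟩
termination_by μ x

theorem Equiv.Perm.sign_eq_one_of_apply_mk_eq_mk_snd {β γ : Type*} [Fintype β] [DecidableEq β]
    [Fintype γ] [DecidableEq γ] (hβ : Even (Fintype.card β)) (g : Perm (β × γ))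
    (hg : ∀ b b' c, g (b', c) = (b', (g (b, c)).2)) : sign g = 1 := by
  cases isEmpty_or_nonempty β
  · rw [Subsingleton.elim g 1, sign_one]
  obtain ⟨b₀⟩ := ‹Nonempty β›
  have hfst : ∀ p, (g p).1 = p.1 := fun ⟨b, c⟩ => by rw [hg b b c]
  let τ : Perm γ :=
    { toFun c := (g (b₀, c)).2
      invFun c := (g⁻¹ (b₀, c)).2
      left_inv c := by beta_reduce; rw [← hg b₀ b₀ c, Perm.inv_def, symm_apply_apply]
      right_inv c := by
        have : (b₀, (g⁻¹ (b₀, c)).2) = g⁻¹ (b₀, c) :=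
          Prod.ext (by simpa using hfst (g⁻¹ (b₀, c))) rfl
        beta_reduce; rw [this, Perm.inv_def, apply_symm_apply] }
  have : g = prodCongrRight fun _ => τ := by
    ext ⟨b, c⟩ <;> simp [hg b₀ b c, τ]
  obtain ⟨k, hk⟩ := hβ
  rw [this, sign_prodCongrRight, prod_const, card_univ, hk, ← two_mul, pow_mul,
    Int.units_sq, one_pow]

theorem Equiv.funSplitAt_update {ι β : Type*} [DecidableEq ι] (d : ι) (y : ι → β) (v : β) :
    funSplitAt d β (update y d v) = (v, (funSplitAt d β y).2) := by
  ext j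
  · simp
  · simp [update_of_ne j.2]

theorem Equiv.Perm.sign_eq_one_of_update_comm {ι β : Type*} [Fintype ι] [DecidableEq ι]
    [Fintype β] [DecidableEq β] (hβ : Even (Fintype.card β)) (f : Perm (ι → β)) (d : ι)
    (hf : ∀ y v, f (update y d v) = update (f y) d v) : sign f = 1 := by
  set e := funSplitAt d β
  rw [← sign_permCongr e]
  refine sign_eq_one_of_apply_mk_eq_mk_snd hβ _ fun b b' c => ?_
  have hsymm : e.symm (b', c) = update (e.symm (b, c)) d b' :=
    e.injective (by rw [funSplitAt_update, apply_symm_apply, apply_symm_apply])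
  rw [permCongr_apply, permCongr_apply, hsymm, hf, funSplitAt_update]

theorem exists_ne_ne_ne_of_three_lt_card {α : Type*} [Fintype α] [DecidableEq α]
    (h : 3 < Fintype.card α) (a b c : α) : ∃ d, d ≠ a ∧ d ≠ b ∧ d ≠ c := by
  obtain ⟨d, -, hd⟩ := exists_mem_notMem_of_card_lt_card
    ((card_le_three (a := a) (b := b) (c := c)).trans_lt h)
  exact ⟨d, by simpa [not_or] using hd⟩

theorem Finset.card_filter_update_eq_zero_lt {ι M : Type*} [Fintype ι] [DecidableEq ι] [Zero M]
    [DecidableEq M] {x : ι → M} {j : ι} (hj : x j = 0) {v : M} (hv : v ≠ 0) :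
    #{k | update x j v k = 0} < #{k | x k = 0} := by
  refine card_lt_card ((ssubset_iff_of_subset fun k => ?_).2 ⟨j, by simp [hj], by simp [hv]⟩)
  by_cases hk : k = j
  · simp [hk, hv]
  · simp [update_of_ne hk]

section Rule57

variable {n : ℕ} [NeZero n]

def rule57 (i : Fin n) (y : Fin n → ZMod 2) : Fin n → ZMod 2 :=
  if y (i - 1) = 0 ∧ y (i + 1) = 1 then y else update y i (y i + 1)

theorem rule57_update_of_ne {i d : Fin n} (hd : d ≠ i - 1 ∧ d ≠ i ∧ d ≠ i + 1)
    (y : Fin n → ZMod 2) (v : ZMod 2) :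
    rule57 i (update y d v) = update (rule57 i y) d v := by
  obtain ⟨h₁, h₀, h₂⟩ := hd
  simp only [rule57, update_of_ne h₁.symm, update_of_ne h₂.symm, update_of_ne h₀.symm]
  split_ifs
  · rfl
  · exact update_comm h₀ _ _ _

theorem exists_rule57_eq_update_one {x : Fin n → ZMod 2} {i : Fin n} (hi : x i = 0) :
    ∃ j, x j = 0 ∧ rule57 j x = update x j 1 := by
  by_cases hc : x (i - 1) = 0 ∧ x (i + 1) = 1
  · -- the rule cannot be blocked at `i - 1`, whose right neighbour `i` is zero
    refine ⟨i - 1, hc.1, ?_⟩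
    rw [rule57, if_neg (by simp [hi]), hc.1, zero_add]
  · exact ⟨i, hi, by rw [rule57, if_neg hc, hi, zero_add]⟩

theorem isPretransitive_closure_rule57 (U : Fin n → Perm (Fin n → ZMod 2))
    (hU : ∀ i y, U i y = rule57 i y) :
    MulAction.IsPretransitive (Subgroup.closure (Set.range U)) (Fin n → ZMod 2) := by
  have hdescent (x : Fin n → ZMod 2) (hx : x ≠ 1) :
      ∃ g ∈ Set.range U, #{k | g x k = 0} < #{k | x k = 0} := by
    obtain ⟨i, hi⟩ : ∃ i, x i = 0 := by
      by_contra! h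
      exact hx (funext fun k => (by decide : ∀ v : ZMod 2, v ≠ 0 → v = 1) _ (h k))
    obtain ⟨j, hj, hxj⟩ := exists_rule57_eq_update_one hi
    refine ⟨U j, ⟨j, rfl⟩, ?_⟩
    rw [hU, hxj]
    exact card_filter_update_eq_zero_lt hj one_ne_zero
  refine (MulAction.isPretransitive_iff_base (1 : Fin n → ZMod 2)).2 fun x => ?_
  obtain ⟨g, hg, hgx⟩ :=
    Perm.exists_mem_closure_apply_eq_of_descent (fun y => #{k | y k = 0}) hdescent x
  exact ⟨⟨g, hg⟩⁻¹, by rw [Subgroup.smul_def, ← hgx]; exact g.symm_apply_apply x⟩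

end Rule57

theorem stmt_13_general {n : ℕ} [NeZero n]
    (U : Fin n → Equiv.Perm (Fin n → ZMod 2))
    (hU : ∀ (i : Fin n) (y : Fin n → ZMod 2),
      U i y = if y (i - 1) = 0 ∧ y (i + 1) = 1
        then y else Function.update y i (y i + 1)) :
    MulAction.IsPretransitive
      ↥(Subgroup.closure (Set.range U)) (Fin n → ZMod 2) ∧
    (4 < n → ∀ i : Fin n, Equiv.Perm.sign (U i) = 1) := by
  refine ⟨isPretransitive_closure_rule57 U hU, fun h4 i => ?_⟩
  obtain ⟨d, hd⟩ := exists_ne_ne_ne_of_three_lt_card (by simp; omega) (i - 1) i (i + 1)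
  refine Perm.sign_eq_one_of_update_comm (by simp) (U i) d fun y v => ?_
  rw [hU, hU]
  exact rule57_update_of_ne hd y v

/-- The dynamics group of Wolfram rule 57 acts transitively on the
set of states, and for `n > 4` each generator is an even permutation. -/
theorem stmt_13 {n : ℕ} [NeZero n] (hn : 3 < n)
    (U : Fin n → Equiv.Perm (Fin n → ZMod 2))
    (hU : ∀ (i : Fin n) (y : Fin n → ZMod 2),
      U i y = if y (i - 1) = 0 ∧ y (i + 1) = 1
        then y else Function.update y i (y i + 1)) :
    MulAction.IsPretransitive
      ↥(Subgroup.closure (Set.range U)) (Fin n → ZMod 2) ∧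
    (4 < n → ∀ i : Fin n, Equiv.Perm.sign (U i) = 1) :=
  stmt_13_general U hU
end

section
/- Fix n > 3. For each i : Fin n let V_i be the permutation of states (Fin n → ZMod 2) that leaves the state unchanged when y_{i−1} = y_{i+1} = 0 and replaces y_i by y_i + 1 otherwise (the Wolfram rule 54 local function at i; each V_i is an involution). Then the orbits of the subgroup of the permutation group of (Fin n → ZMod 2) generated by {V_i ∣ i : Fin n} are exactly the singleton {0} consisting of the all-zero state, and the set of all remaining 2^n − 1 states; in particular there are exactly 2 orbits. -/
/-!
The all-zero state is fixed by every `V i`, so its orbit is `{0}`. Conversely, if `y i ≠ 0` and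
`y (i + 1) = 0`, then `V (i + 1)` sets `y (i + 1)` to `1`. A nonzero state other than the
all-ones state always has such a position `i`, so repeating this move reaches the all-ones
state from every nonzero state; hence all nonzero states form a single orbit.
-/

open MulAction Finset

section Orbits

variable {G α : Type*} [Group G] [MulAction G α]

theorem MulAction.orbit_eq_singleton_of_le_stabilizer {H : Subgroup G} {a : α}
    (h : H ≤ stabilizer G a) : orbit H a = {a} :=
  (subsingleton_orbit_iff_mem_fixedPoints (M := H).2 fun g => h g.2).eq_singleton_of_mem
    (mem_orbit_self a)

theorem MulAction.orbit_eq_setOf_ne_of_forall_mem_orbit {a b : α} (hba : b ≠ a)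
    (ha : orbit G a = {a}) (hb : ∀ y, y ≠ a → b ∈ orbit G y) (y : α) (hy : y ≠ a) :
    orbit G y = {z | z ≠ a} := by
  rw [orbit_eq_iff.2 (mem_orbit_symm.1 (hb y hy))]
  ext z
  refine ⟨?_, fun hz => mem_orbit_symm.1 (hb z hz)⟩
  rintro hz rfl
  rw [mem_orbit_symm, ha] at hz
  exact hba hz

theorem MulAction.card_orbitRel_quotient_eq_two {a b : α} (hba : b ≠ a)
    (ha : orbit G a = {a}) (hb : orbit G b = {z | z ≠ a}) :
    Nat.card (Quotient (orbitRel G α)) = 2 := by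
  refine Nat.card_eq_two_iff.2 ⟨⟦a⟧, ⟦b⟧, fun h => hba ?_, ?_⟩
  · simpa [ha] using (orbitRel_apply.1 (Quotient.exact h.symm))
  · refine Set.eq_univ_of_forall (Quotient.ind fun y => ?_)
    by_cases hy : y = a
    · exact Or.inl (by rw [hy])
    · exact Or.inr (Quotient.sound (orbitRel_apply.2 (by rw [hb]; exact hy)))

end Orbits

open Fin.NatCast in
theorem Fin.exists_and_not_add_one {n : ℕ} [NeZero n] {P : Fin n → Prop} {j k : Fin n}
    (hj : P j) (hk : ¬P k) : ∃ i, P i ∧ ¬P (i + 1) := by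
  by_contra! h
  have hshift : ∀ m : ℕ, P (j + m) := by
    intro m
    induction m with
    | zero => simpa using hj
    | succ m ih => simpa [Nat.cast_succ, add_assoc] using h _ ih
  have := hshift (k - j).val
  rw [Fin.cast_val_eq_self, add_sub_cancel] at this
  exact hk this

theorem exists_ne_zero_and_add_one_eq_zero {n : ℕ} [NeZero n] {y : Fin n → ZMod 2}
    (h0 : y ≠ 0) (h1 : y ≠ 1) : ∃ i, y i ≠ 0 ∧ y (i + 1) = 0 := by
  obtain ⟨j, hj⟩ := Function.ne_iff.1 h0
  obtain ⟨k, hk⟩ := Function.ne_iff.1 h1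
  have hk : ¬y k ≠ 0 := fun h => hk ((by decide : ∀ a : ZMod 2, a ≠ 0 → a = 1) _ h)
  simpa using Fin.exists_and_not_add_one (P := fun i => y i ≠ 0) hj hk

theorem card_filter_update_eq_zero_lt {ι M : Type*} [Fintype ι] [DecidableEq ι] [Zero M]
    [DecidableEq M] {y : ι → M} {i : ι} {b : M} (hb : b ≠ 0) (hi : y i = 0) :
    #{j | Function.update y i b j = 0} < #{j | y j = 0} := by
  have hzeros :
      ({j | Function.update y i b j = 0} : Finset ι) = ({j | y j = 0} : Finset ι).erase i := by
    ext j
    by_cases hj : j = i <;> simp [Function.update_apply, hj, hb]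
  rw [hzeros]
  exact card_erase_lt_of_mem (by simpa using hi)

section Rule54

variable {n : ℕ} [NeZero n]

def IsRule54LocalMaps (V : Fin n → Equiv.Perm (Fin n → ZMod 2)) : Prop :=
  ∀ (i : Fin n) (y : Fin n → ZMod 2),
    V i y = if y (i - 1) = 0 ∧ y (i + 1) = 0 then y else Function.update y i (y i + 1)

variable {V : Fin n → Equiv.Perm (Fin n → ZMod 2)}

theorem rule54_apply_zero (hV : IsRule54LocalMaps V) (i : Fin n) :
    V i 0 = 0 := by
  simp [hV i 0]

theorem rule54_apply_add_one (hV : IsRule54LocalMaps V) {y : Fin n → ZMod 2} {i : Fin n}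
    (hi : y i ≠ 0) (hi' : y (i + 1) = 0) :
    V (i + 1) y = Function.update y (i + 1) 1 := by
  rw [hV, add_sub_cancel_right, if_neg (fun h => hi h.1), hi', zero_add]

theorem rule54_one_mem_orbit (hV : IsRule54LocalMaps V) {y : Fin n → ZMod 2} (hy : y ≠ 0) :
    1 ∈ orbit (Subgroup.closure (Set.range V)) y := by
  by_cases h1 : y = 1
  · exact h1 ▸ mem_orbit_self y
  obtain ⟨i, hi, hi'⟩ := exists_ne_zero_and_add_one_eq_zero hy h1
  set y' := Function.update y (i + 1) 1
  have hy' : y' ∈ orbit (Subgroup.closure (Set.range V)) y :=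
    ⟨⟨V (i + 1), Subgroup.subset_closure ⟨i + 1, rfl⟩⟩, rule54_apply_add_one hV hi hi'⟩
  have hy'0 : y' ≠ 0 := Function.ne_iff.2 ⟨i + 1, by simp [y']⟩
  rw [← orbit_eq_iff.2 hy']
  exact rule54_one_mem_orbit hV hy'0
termination_by #{j | y j = 0}
decreasing_by exact card_filter_update_eq_zero_lt one_ne_zero hi'

end Rule54

theorem stmt_14_general {n : ℕ} [NeZero n]
    (V : Fin n → Equiv.Perm (Fin n → ZMod 2))
    (hV : ∀ (i : Fin n) (y : Fin n → ZMod 2),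
      V i y = if y (i - 1) = 0 ∧ y (i + 1) = 0
        then y else Function.update y i (y i + 1)) :
    MulAction.orbit ↥(Subgroup.closure (Set.range V)) (0 : Fin n → ZMod 2)
        = {0} ∧
    (∀ y : Fin n → ZMod 2, y ≠ 0 →
      MulAction.orbit ↥(Subgroup.closure (Set.range V)) y
        = {z : Fin n → ZMod 2 | z ≠ 0}) ∧
    Nat.card (Quotient (MulAction.orbitRel
        ↥(Subgroup.closure (Set.range V)) (Fin n → ZMod 2))) = 2 := by
  have horbit_zero : orbit (Subgroup.closure (Set.range V)) (0 : Fin n → ZMod 2) = {0} :=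
    orbit_eq_singleton_of_le_stabilizer <| (Subgroup.closure_le _).2 <|
      Set.range_subset_iff.2 (rule54_apply_zero hV)
  have horbit_ne_zero := orbit_eq_setOf_ne_of_forall_mem_orbit one_ne_zero horbit_zero
    fun _ hy => rule54_one_mem_orbit hV hy
  exact ⟨horbit_zero, horbit_ne_zero, card_orbitRel_quotient_eq_two one_ne_zero
    horbit_zero (horbit_ne_zero 1 one_ne_zero)⟩

/-- The orbits of the dynamics group of Wolfram rule 54 are exactly
the singleton of the all-zero state and the set of all other states; in
particular there are exactly 2 orbits. -/
theorem stmt_14 {n : ℕ} [NeZero n] (hn : 3 < n)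
    (V : Fin n → Equiv.Perm (Fin n → ZMod 2))
    (hV : ∀ (i : Fin n) (y : Fin n → ZMod 2),
      V i y = if y (i - 1) = 0 ∧ y (i + 1) = 0
        then y else Function.update y i (y i + 1)) :
    MulAction.orbit ↥(Subgroup.closure (Set.range V)) (0 : Fin n → ZMod 2)
        = {0} ∧
    (∀ y : Fin n → ZMod 2, y ≠ 0 →
      MulAction.orbit ↥(Subgroup.closure (Set.range V)) y
        = {z : Fin n → ZMod 2 | z ≠ 0}) ∧
    Nat.card (Quotient (MulAction.orbitRel
        ↥(Subgroup.closure (Set.range V)) (Fin n → ZMod 2))) = 2 :=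
  stmt_14_general V hV
end

section
/- Fix n > 4. For each i : Fin n let W_i be the map on states (Fin n → ZMod 2) given by the Wolfram rule 29 local function at i: it replaces y_i by 0 when y_{i−1} = y_{i+1} = 1, replaces y_i by y_i + 1 when (y_{i−1}, y_{i+1}) = (1, 0), leaves y_i unchanged when (y_{i−1}, y_{i+1}) = (0, 1), and replaces y_i by 1 when y_{i−1} = y_{i+1} = 0. Then each W_i maps N_BCF bijectively onto itself, and the subgroup of the permutation group of N_BCF generated by these restrictions is isomorphic to the direct product of n copies of ℤ/2ℤ; in particular it has order 2^n. -/
/-!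
On a BCF state the rule-29 map at `i` can only flip `y i`, and it does so exactly when
`(y (i - 1), y (i + 1)) = (1, 0)`: the neighbourhoods `1 ? 1` and `0 ? 0` are forced to read
`101` and `010` by the forbidden patterns `111` and `000`. Around such a flippable cell the
forbidden patterns force `0 1 ? 0 1`, so flipping any set of flippable cells keeps the state BCF
and changes the flippability of no cell. Hence flipping the flippable cells in a set `v` is an
action of `(ℤ/2)^n` on `N_BCF` in which the rule-29 maps are the basis vectors; it is faithful
because every cell is flippable in a suitable rotation of one explicit BCF state.
-/

namespace Rule29

variable {n : ℕ} [NeZero n]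

def IsBCF (y : Fin n → ZMod 2) : Prop :=
  (∀ i : Fin n, ¬(y i = 0 ∧ y (i + 1) = 0 ∧ y (i + 2) = 0)) ∧
  (∀ i : Fin n, ¬(y i = 1 ∧ y (i + 1) = 1 ∧ y (i + 2) = 1)) ∧
  (∀ i : Fin n, ¬(y i = 1 ∧ y (i + 1) = 1 ∧ y (i + 2) = 0 ∧ y (i + 3) = 0))

def localMap (i : Fin n) (y : Fin n → ZMod 2) : Fin n → ZMod 2 :=
  if y (i - 1) = 1 ∧ y (i + 1) = 1 then Function.update y i 0
  else if y (i - 1) = 1 ∧ y (i + 1) = 0 then Function.update y i (y i + 1)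
  else if y (i - 1) = 0 ∧ y (i + 1) = 1 then y
  else Function.update y i 1

def IsFlippable (y : Fin n → ZMod 2) (k : Fin n) : Prop :=
  y (k - 1) = 1 ∧ y (k + 1) = 0

instance (y : Fin n → ZMod 2) (k : Fin n) : Decidable (IsFlippable y k) :=
  inferInstanceAs (Decidable (_ ∧ _))

def flipBy (v y : Fin n → ZMod 2) : Fin n → ZMod 2 :=
  fun k => if IsFlippable y k then y k + v k else y k

theorem zmod_two_eq_zero_or_eq_one (x : ZMod 2) : x = 0 ∨ x = 1 := by
  revert x; decide

variable {y : Fin n → ZMod 2} {k : Fin n}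

theorem flipBy_of_isFlippable (hk : IsFlippable y k) (v : Fin n → ZMod 2) :
    flipBy v y k = y k + v k :=
  if_pos hk

theorem flipBy_of_not_isFlippable (hk : ¬IsFlippable y k) (v : Fin n → ZMod 2) :
    flipBy v y k = y k :=
  if_neg hk

theorem flipBy_zero (y : Fin n → ZMod 2) : flipBy 0 y = y := by
  funext k
  simp [flipBy]

theorem IsBCF.nbhd_of_isFlippable (hy : IsBCF y) (hk : IsFlippable y k) :
    y (k - 2) = 0 ∧ y (k + 2) = 1 := by
  -- otherwise `111` or `1100` starts at `k - 2`, resp. `000` starts at `k` or `1100` at `k - 1`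
  have h111 := hy.2.1 (k - 2)
  have h1100l := hy.2.2 (k - 2)
  have h000 := hy.1 k
  have h1100r := hy.2.2 (k - 1)
  unfold IsFlippable at hk
  rcases zmod_two_eq_zero_or_eq_one (y k), zmod_two_eq_zero_or_eq_one (y (k - 2)),
    zmod_two_eq_zero_or_eq_one (y (k + 2)) with ⟨h | h, h' | h', h'' | h''⟩
  all_goals
    open Fin.CommRing in ring_nf at *
    simp_all

theorem IsBCF.flipBy_nbhd_of_isFlippable (hy : IsBCF y) (hk : IsFlippable y k)
    (v : Fin n → ZMod 2) :
    flipBy v y (k - 2) = 0 ∧ flipBy v y (k - 1) = 1 ∧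
      flipBy v y (k + 1) = 0 ∧ flipBy v y (k + 2) = 1 := by
  obtain ⟨hm2, hp2⟩ := hy.nbhd_of_isFlippable hk
  unfold flipBy IsFlippable at *
  open Fin.CommRing in ring_nf at *
  simp_all

theorem isBCF_flipBy (hy : IsBCF y) (v : Fin n → ZMod 2) : IsBCF (flipBy v y) := by
  -- if a cell of the window is flippable, the values `0 1 ? 0 1` of `flipBy v y` around it
  -- clash with the pattern; otherwise `flipBy v y` agrees with `y` on the window
  refine ⟨fun j hj => ?_, fun j hj => ?_, fun j hj => ?_⟩
  all_goals
    by_cases hf : IsFlippable y j ∨ IsFlippable y (j + 1) ∨ IsFlippable y (j + 2) ∨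
      IsFlippable y (j + 3)
    · rcases hf with h | h | h | h <;>
      · have := hy.flipBy_nbhd_of_isFlippable h v
        open Fin.CommRing in ring_nf at hj this
        simp_all
    simp only [not_or] at hf
    simp only [flipBy_of_not_isFlippable hf.1, flipBy_of_not_isFlippable hf.2.1,
      flipBy_of_not_isFlippable hf.2.2.1, flipBy_of_not_isFlippable hf.2.2.2] at hj
  exacts [hy.1 j hj, hy.2.1 j hj, hy.2.2 j hj]

theorem IsBCF.isFlippable_flipBy_iff (hy : IsBCF y) (v : Fin n → ZMod 2) :
    IsFlippable (flipBy v y) k ↔ IsFlippable y k := by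
  refine ⟨fun ⟨hl, hr⟩ => ?_, fun hk => ⟨(hy.flipBy_nbhd_of_isFlippable hk v).2.1,
    (hy.flipBy_nbhd_of_isFlippable hk v).2.2.1⟩⟩
  by_cases hfl : IsFlippable y (k - 1)
  · have := (hy.flipBy_nbhd_of_isFlippable hfl v).2.2.2
    open Fin.CommRing in ring_nf at hr this
    simp_all
  by_cases hfr : IsFlippable y (k + 1)
  · have := (hy.flipBy_nbhd_of_isFlippable hfr v).1
    open Fin.CommRing in ring_nf at hl this
    simp_all
  rw [flipBy_of_not_isFlippable hfl] at hl
  rw [flipBy_of_not_isFlippable hfr] at hr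
  exact ⟨hl, hr⟩

theorem IsBCF.flipBy_add (hy : IsBCF y) (v w : Fin n → ZMod 2) :
    flipBy (v + w) y = flipBy v (flipBy w y) := by
  funext k
  by_cases hk : IsFlippable y k
  · rw [flipBy_of_isFlippable ((hy.isFlippable_flipBy_iff w).mpr hk),
      flipBy_of_isFlippable hk, flipBy_of_isFlippable hk, Pi.add_apply]
    abel
  · rw [flipBy_of_not_isFlippable (mt (hy.isFlippable_flipBy_iff w).mp hk),
      flipBy_of_not_isFlippable hk, flipBy_of_not_isFlippable hk]

theorem IsBCF.flipBy_flipBy_self (hy : IsBCF y) (v : Fin n → ZMod 2) :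
    flipBy v (flipBy v y) = y := by
  rw [← hy.flipBy_add, CharTwo.add_self_eq_zero, flipBy_zero]

theorem bijOn_flipBy (v : Fin n → ZMod 2) :
    Set.BijOn (flipBy v) {y | IsBCF y} {y | IsBCF y} :=
  Set.InvOn.bijOn
    ⟨fun _ (hy : IsBCF _) => hy.flipBy_flipBy_self v,
      fun _ (hy : IsBCF _) => hy.flipBy_flipBy_self v⟩
    (fun _ hy => isBCF_flipBy hy v) (fun _ hy => isBCF_flipBy hy v)

theorem IsBCF.localMap_eq_flipBy (hy : IsBCF y) (i : Fin n) :
    localMap i y = flipBy (Pi.single i 1) y := by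
  funext k
  by_cases hki : k = i
  · subst hki
    have h000 := hy.1 (k - 1)
    have h111 := hy.2.1 (k - 1)
    rw [sub_add_cancel, show k - 1 + 2 = k + 1 by open Fin.CommRing in ring] at h000 h111
    rcases zmod_two_eq_zero_or_eq_one (y (k - 1)), zmod_two_eq_zero_or_eq_one (y k),
      zmod_two_eq_zero_or_eq_one (y (k + 1)) with ⟨h | h, h' | h', h'' | h''⟩ <;>
      simp_all [localMap, flipBy, IsFlippable]
  · simp only [localMap, flipBy, Pi.single_eq_of_ne hki, add_zero, ite_self]
    split_ifs <;> simp [Function.update_of_ne hki]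

theorem IsBCF.of_no_00_no_111 (h00 : ∀ i, ¬(y i = 0 ∧ y (i + 1) = 0))
    (h111 : ∀ i, ¬(y i = 1 ∧ y (i + 1) = 1 ∧ y (i + 2) = 1)) : IsBCF y := by
  refine ⟨fun i h => h00 i ⟨h.1, h.2.1⟩, h111, fun i h => h00 (i + 2) ⟨h.2.2.1, ?_⟩⟩
  rw [add_assoc, show (2 : Fin n) + 1 = 3 by open Fin.CommRing in ring]
  exact h.2.2.2

theorem IsBCF.comp_add_right (hy : IsBCF y) (c : Fin n) : IsBCF fun k => y (k + c) :=
  ⟨fun i => by simpa only [add_right_comm _ _ c] using hy.1 (i + c),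
    fun i => by simpa only [add_right_comm _ _ c] using hy.2.1 (i + c),
    fun i => by simpa only [add_right_comm _ _ c] using hy.2.2 (i + c)⟩

/-- `1101` followed by an alternating word ending in `0`, e.g. `11010`, `110110`, `1101010`. -/
def witness (n : ℕ) : Fin n → ZMod 2 :=
  fun k => if k.val = 2 ∨ (4 ≤ k.val ∧ (n - k.val) % 2 = 1) then 0 else 1

theorem isBCF_witness (hn : 4 < n) : IsBCF (witness n) := by
  have val_add (i b : Fin n) :
      (i + b).val = i.val + b.val ∨ (n ≤ i.val + b.val ∧ (i + b).val = i.val + b.val - n) := by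
    rw [Fin.val_add_eq_ite]
    split_ifs <;> omega
  have val_one : (1 : Fin n).val = 1 := by simp [Nat.mod_eq_of_lt (show 1 < n by omega)]
  have val_two : (2 : Fin n).val = 2 := by simp [Nat.mod_eq_of_lt (show 2 < n by omega)]
  refine IsBCF.of_no_00_no_111 (fun i => ?_) (fun i => ?_)
  all_goals
    have h1 := val_one ▸ val_add i 1
    have h2 := val_two ▸ val_add i 2
    simp only [witness, ite_eq_left_iff, ite_eq_right_iff, one_ne_zero, zero_ne_one, imp_false,
      not_not]
    omega

theorem isFlippable_witness (hn : 4 < n) : IsFlippable (witness n) 1 := by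
  unfold IsFlippable
  rw [sub_self, show (1 : Fin n) + 1 = 2 by open Fin.CommRing in ring]
  simp [witness, Nat.mod_eq_of_lt (show 2 < n by omega)]

theorem exists_isBCF_isFlippable (hn : 4 < n) (i : Fin n) :
    ∃ y : Fin n → ZMod 2, IsBCF y ∧ IsFlippable y i := by
  refine ⟨fun k => witness n (k + (1 - i)), (isBCF_witness hn).comp_add_right _, ?_⟩
  show witness n (i - 1 + (1 - i)) = 1 ∧ witness n (i + 1 + (1 - i)) = 0
  rw [show i - 1 + (1 - i) = 1 - 1 by abel, show i + 1 + (1 - i) = 1 + 1 by abel]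
  exact isFlippable_witness hn

def flipPerm :
    (Fin n → Multiplicative (ZMod 2)) →* Equiv.Perm {y : Fin n → ZMod 2 | IsBCF y} where
  toFun v :=
    { toFun y := ⟨flipBy (fun k => (v k).toAdd) y, isBCF_flipBy y.2 _⟩
      invFun y := ⟨flipBy (fun k => (v k).toAdd) y, isBCF_flipBy y.2 _⟩
      left_inv y := Subtype.ext (IsBCF.flipBy_flipBy_self y.2 _)
      right_inv y := Subtype.ext (IsBCF.flipBy_flipBy_self y.2 _) }
  map_one' := Equiv.ext fun y => Subtype.ext (flipBy_zero y.1)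
  map_mul' _ _ := Equiv.ext fun y => Subtype.ext (IsBCF.flipBy_add y.2 _ _)

theorem flipPerm_apply (v : Fin n → Multiplicative (ZMod 2))
    (y : {y : Fin n → ZMod 2 | IsBCF y}) :
    (flipPerm v y : Fin n → ZMod 2) = flipBy (fun k => (v k).toAdd) y :=
  rfl

theorem flipPerm_mulSingle (i : Fin n) (y : {y : Fin n → ZMod 2 | IsBCF y}) :
    (flipPerm (Pi.mulSingle i (Multiplicative.ofAdd 1)) y : Fin n → ZMod 2) =
      flipBy (Pi.single i 1) y :=
  rfl

theorem injective_flipPerm (hn : 4 < n) : Function.Injective (flipPerm (n := n)) := by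
  refine (injective_iff_map_eq_one _).mpr fun v hv => funext fun i => ?_
  obtain ⟨y, hy, hi⟩ := exists_isBCF_isFlippable hn i
  have := congr_fun (congrArg Subtype.val (Equiv.ext_iff.mp hv ⟨y, hy⟩)) i
  rw [flipPerm_apply, Equiv.Perm.one_apply, flipBy_of_isFlippable hi, add_eq_left] at this
  exact toAdd_eq_zero.mp this

theorem closure_range_mulSingle_ofAdd_one {ι : Type*} [Fintype ι] [DecidableEq ι] :
    Subgroup.closure
        (Set.range fun i : ι => Pi.mulSingle i (Multiplicative.ofAdd (1 : ZMod 2))) = ⊤ := by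
  refine eq_top_iff.mpr fun v _ => ?_
  rw [← Finset.univ_prod_mulSingle v]
  refine Subgroup.prod_mem _ fun i _ => ?_
  rcases zmod_two_eq_zero_or_eq_one (v i).toAdd with h | h
  · rw [toAdd_eq_zero.mp h, Pi.mulSingle_one]
    exact Subgroup.one_mem _
  · rw [← ofAdd_toAdd (v i), h]
    exact Subgroup.subset_closure ⟨i, rfl⟩

theorem range_flipPerm :
    (flipPerm (n := n)).range =
      Subgroup.closure (Set.range fun i => flipPerm (Pi.mulSingle i (Multiplicative.ofAdd 1))) := by
  rw [Set.range_comp' .., ← MonoidHom.map_closure, closure_range_mulSingle_ofAdd_one,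
    MonoidHom.range_eq_map]

theorem setOf_perm_eq_localMap_eq_range :
    {e : Equiv.Perm {y : Fin n → ZMod 2 | IsBCF y} |
        ∃ i : Fin n, ∀ y : {y : Fin n → ZMod 2 | IsBCF y},
          (e y : Fin n → ZMod 2) = localMap i (y : Fin n → ZMod 2)} =
      Set.range fun i => flipPerm (Pi.mulSingle i (Multiplicative.ofAdd 1)) := by
  ext e
  simp only [Set.mem_range, Equiv.ext_iff, Subtype.ext_iff, flipPerm_mulSingle,
    fun y : {y : Fin n → ZMod 2 | IsBCF y} => IsBCF.localMap_eq_flipBy y.2]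
  exact exists_congr fun i => ⟨fun h y => (h y).symm, fun h y => (h y).symm⟩

end Rule29

/-- Each Wolfram rule 29 local function maps `N_BCF` (no cyclic
occurrence of 000, 111 or 1100) bijectively onto itself, and the group of
permutations of `N_BCF` generated by these restrictions is isomorphic to the
direct product of `n` copies of `ℤ/2ℤ`; in particular it has order `2^n`. -/
theorem stmt_15 {n : ℕ} [NeZero n] (hn : 4 < n)
    (W : Fin n → (Fin n → ZMod 2) → (Fin n → ZMod 2))
    (hW : ∀ (i : Fin n) (y : Fin n → ZMod 2),
      W i y =
        if y (i - 1) = 1 ∧ y (i + 1) = 1 then Function.update y i 0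
        else if y (i - 1) = 1 ∧ y (i + 1) = 0 then Function.update y i (y i + 1)
        else if y (i - 1) = 0 ∧ y (i + 1) = 1 then y
        else Function.update y i 1)
    (NBCF : Set (Fin n → ZMod 2))
    (hNBCF : ∀ y : Fin n → ZMod 2, y ∈ NBCF ↔
      (∀ i : Fin n, ¬(y i = 0 ∧ y (i + 1) = 0 ∧ y (i + 2) = 0)) ∧
      (∀ i : Fin n, ¬(y i = 1 ∧ y (i + 1) = 1 ∧ y (i + 2) = 1)) ∧
      (∀ i : Fin n,
        ¬(y i = 1 ∧ y (i + 1) = 1 ∧ y (i + 2) = 0 ∧ y (i + 3) = 0))) :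
    (∀ i : Fin n, Set.BijOn (W i) NBCF NBCF) ∧
    Nonempty (↥(Subgroup.closure {e : Equiv.Perm ↥NBCF |
        ∃ i : Fin n, ∀ y : ↥NBCF, (e y : Fin n → ZMod 2) = W i (y : Fin n → ZMod 2)})
      ≃* (Fin n → Multiplicative (ZMod 2))) ∧
    Nat.card ↥(Subgroup.closure {e : Equiv.Perm ↥NBCF |
        ∃ i : Fin n, ∀ y : ↥NBCF, (e y : Fin n → ZMod 2) = W i (y : Fin n → ZMod 2)})
      = 2 ^ n := by
  obtain rfl : NBCF = {y | Rule29.IsBCF y} := Set.ext hNBCF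
  obtain rfl : W = Rule29.localMap := funext fun i => funext (hW i)
  rw [Rule29.setOf_perm_eq_localMap_eq_range, ← Rule29.range_flipPerm]
  have range_equiv := (MonoidHom.ofInjective (Rule29.injective_flipPerm hn)).symm
  refine ⟨fun i => (Rule29.bijOn_flipBy _).congr fun y hy =>
    (Rule29.IsBCF.localMap_eq_flipBy hy i).symm, ⟨range_equiv⟩, ?_⟩
  rw [Nat.card_congr range_equiv.toEquiv]
  simp
end

section
/- Fix n > 3. For each i : Fin n let X_i be the map on states (Fin n → ZMod 2) given by the Wolfram rule 73 local function at i: it replaces y_i by 0 when y_{i−1} = y_{i+1} = 1, replaces y_i by y_i + 1 when y_{i−1} = y_{i+1} = 0, and leaves the state unchanged otherwise. Then for every fair update order ω, the set of periodic points of the SDS map [X, ω] = X_{ω_m} ∘ ⋯ ∘ X_{ω_1} equals N_C, the set of states with no three cyclically consecutive 1s. -/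
/-!
Call a pair of cyclically adjacent positions carrying 1s a *pair of ones*. A rule 73 update never
creates a pair of ones, so the set of pairs of ones can only shrink along an orbit. If `y` has
three consecutive 1s at `i, i+1, i+2`, then either that set shrinks before the first update at
`i+1` in a fair sweep, or the triple survives until then and that update turns `y (i+1)` into 0;
either way the set shrinks strictly over one sweep, so `y` is not periodic. Conversely, on `N_C`
every local map preserves `N_C` and is an involution, so the SDS map permutes the finite set
`N_C`, and every point of `N_C` is periodic.
-/

open Function Set

theorem Function.notMem_periodicPts_of_lt {α β : Type*} [Preorder β] {f : α → α}
    {V : α → β} (hV : ∀ x, V (f x) ≤ V x) {y : α} (hy : V (f y) < V y) :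
    y ∉ periodicPts f := by
  rintro ⟨k, hk, hky⟩
  have hanti : Antitone fun m => V (f^[m] (f y)) :=
    antitone_nat_of_succ_le fun m => by rw [iterate_succ_apply']; exact hV _
  have hle : V (f^[k - 1] (f y)) ≤ V (f y) := hanti (Nat.zero_le _)
  rw [← iterate_succ_apply, Nat.succ_eq_add_one, Nat.sub_one_add_one hk.ne', hky.eq] at hle
  exact hy.not_ge hle

theorem Set.Finite.subset_periodicPts {α : Type*} {f : α → α} {s : Set α}
    (hs : s.Finite) (hmaps : MapsTo f s s) (hinj : InjOn f s) : s ⊆ periodicPts f := by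
  have := hs.to_subtype
  intro x hx
  exact Semiconj.mapsTo_periodicPts (fun _ => rfl : Semiconj Subtype.val (hmaps.restrict f s s) f)
    ((hmaps.restrict_inj.mpr hinj).mem_periodicPts ⟨x, hx⟩)

lemma Fin.add_one_ne_self {n : ℕ} [NeZero n] (hn : 1 < n) (j : Fin n) : j + 1 ≠ j := by
  intro h
  have h1 : (1 : Fin n) = 0 := by simpa using h
  have := congrArg Fin.val h1
  simp [Nat.mod_eq_of_lt hn] at this

namespace Rule73

open Fin.CommRing

def rule73 (a b c : ZMod 2) : ZMod 2 :=
  if a = 1 ∧ c = 1 then 0 else if a = 0 ∧ c = 0 then b + 1 else b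

lemma rule73_rule73 {a b c : ZMod 2} (h : ¬(a = 1 ∧ b = 1 ∧ c = 1)) :
    rule73 a (rule73 a b c) c = b := by
  revert a b c; decide

lemma eq_one_of_rule73_eq_one {a b c : ZMod 2} (h : rule73 a b c = 1) (hac : a = 1 ∨ c = 1) :
    b = 1 := by
  revert a b c; decide

variable {n : ℕ} [NeZero n]

def localMap (j : Fin n) (y : Fin n → ZMod 2) : Fin n → ZMod 2 :=
  update y j (rule73 (y (j - 1)) (y j) (y (j + 1)))

def sdsMap (ω : List (Fin n)) (y : Fin n → ZMod 2) : Fin n → ZMod 2 :=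
  ω.foldl (fun s j => localMap j s) y

def onesPairs (y : Fin n → ZMod 2) : Set (Fin n) :=
  {p | y p = 1 ∧ y (p + 1) = 1}

def noTripleOnes : Set (Fin n → ZMod 2) :=
  {y | ∀ i : Fin n, ¬(y i = 1 ∧ y (i + 1) = 1 ∧ y (i + 2) = 1)}

lemma localMap_eq_ite (j : Fin n) (y : Fin n → ZMod 2) :
    localMap j y =
      if y (j - 1) = 1 ∧ y (j + 1) = 1 then update y j 0
      else if y (j - 1) = 0 ∧ y (j + 1) = 0 then update y j (y j + 1)
      else y := by
  unfold localMap rule73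
  split_ifs <;> simp

lemma tripleOnes_iff (y : Fin n → ZMod 2) (i : Fin n) :
    (y i = 1 ∧ y (i + 1) = 1 ∧ y (i + 2) = 1) ↔ i ∈ onesPairs y ∧ i + 1 ∈ onesPairs y := by
  simp only [onesPairs, mem_ofPred_eq, show i + 1 + 1 = i + 2 by ring]
  tauto

lemma onesPairs_localMap_subset (hn : 1 < n) (j : Fin n) (y : Fin n → ZMod 2) :
    onesPairs (localMap j y) ⊆ onesPairs y := by
  rintro p ⟨hp, hp1⟩
  have hne := Fin.add_one_ne_self hn p
  by_cases hpj : p = j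
  · subst hpj
    rw [localMap, update_of_ne hne] at hp1
    rw [localMap, update_self] at hp
    exact ⟨eq_one_of_rule73_eq_one hp (.inr hp1), hp1⟩
  by_cases hp1j : p + 1 = j
  · subst hp1j
    rw [localMap, update_of_ne hpj] at hp
    rw [localMap, update_self, add_sub_cancel_right] at hp1
    exact ⟨hp, eq_one_of_rule73_eq_one hp1 (.inl hp)⟩
  rw [localMap, update_of_ne hpj] at hp
  rw [localMap, update_of_ne hp1j] at hp1
  exact ⟨hp, hp1⟩

lemma onesPairs_sdsMap_subset (hn : 1 < n) (ω : List (Fin n)) (y : Fin n → ZMod 2) :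
    onesPairs (sdsMap ω y) ⊆ onesPairs y := by
  induction ω generalizing y with
  | nil => exact subset_rfl
  | cons j ω ih => exact (ih (localMap j y)).trans (onesPairs_localMap_subset hn j y)

lemma onesPairs_sdsMap_ssubset (hn : 1 < n) {ω : List (Fin n)} {y : Fin n → ZMod 2} {i : Fin n}
    (hy : y i = 1 ∧ y (i + 1) = 1 ∧ y (i + 2) = 1) (hω : i + 1 ∈ ω) :
    onesPairs (sdsMap ω y) ⊂ onesPairs y := by
  induction ω generalizing y with
  | nil => exact absurd hω List.not_mem_nil
  | cons j ω ih =>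
    rcases (onesPairs_localMap_subset hn j y).ssubset_or_eq with hlt | heq
    · exact (onesPairs_sdsMap_subset hn ω _).trans_ssubset hlt
    have hy' := (tripleOnes_iff _ i).mpr (heq ▸ (tripleOnes_iff y i).mp hy)
    have hj : j ≠ i + 1 := by
      rintro rfl
      have := hy'.2.1
      rw [localMap, update_self, add_sub_cancel_right, show i + 1 + 1 = i + 2 by ring,
        hy.1, hy.2.1, hy.2.2] at this
      exact absurd this (by decide)
    rw [← heq]
    exact ih hy' ((List.mem_cons.mp hω).resolve_left (Ne.symm hj))

lemma mapsTo_localMap (hn : 1 < n) (j : Fin n) :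
    MapsTo (localMap j) noTripleOnes noTripleOnes := fun y hy i hi =>
  hy i <| (tripleOnes_iff y i).mpr <| ((tripleOnes_iff _ i).mp hi).imp
    (fun h => onesPairs_localMap_subset hn j y h) (fun h => onesPairs_localMap_subset hn j y h)

lemma localMap_localMap (hn : 1 < n) (j : Fin n) {y : Fin n → ZMod 2}
    (hy : y ∈ noTripleOnes) : localMap j (localMap j y) = y := by
  have hj : ¬(y (j - 1) = 1 ∧ y j = 1 ∧ y (j + 1) = 1) := by
    simpa [show j - 1 + 1 = j by ring, show j - 1 + 2 = j + 1 by ring] using hy (j - 1)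
  have hsub : j - 1 ≠ j := fun h => Fin.add_one_ne_self hn (j - 1) (by rw [sub_add_cancel, h])
  conv_lhs => rw [localMap, localMap, update_of_ne hsub, update_of_ne (Fin.add_one_ne_self hn j),
    update_self, update_idem, rule73_rule73 hj, update_eq_self]

lemma injOn_localMap (hn : 1 < n) (j : Fin n) : InjOn (localMap j) noTripleOnes :=
  LeftInvOn.injOn fun _ hy => localMap_localMap hn j hy

lemma mapsTo_sdsMap (hn : 1 < n) (ω : List (Fin n)) :
    MapsTo (sdsMap ω) noTripleOnes noTripleOnes := by
  induction ω with
  | nil => exact mapsTo_id _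
  | cons j ω ih => exact ih.comp (mapsTo_localMap hn j)

lemma injOn_sdsMap (hn : 1 < n) (ω : List (Fin n)) : InjOn (sdsMap ω) noTripleOnes := by
  induction ω with
  | nil => exact injOn_id _
  | cons j ω ih => exact ih.comp (injOn_localMap hn j) (mapsTo_localMap hn j)

theorem periodicPts_sdsMap (hn : 1 < n) {ω : List (Fin n)} (hω : ∀ i, i ∈ ω) :
    periodicPts (sdsMap ω) = noTripleOnes := by
  refine Subset.antisymm (fun y hy i hi => ?_)
    (toFinite _ |>.subset_periodicPts (mapsTo_sdsMap hn ω) (injOn_sdsMap hn ω))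
  exact notMem_periodicPts_of_lt (onesPairs_sdsMap_subset hn ω)
    (onesPairs_sdsMap_ssubset hn hi (hω (i + 1))) hy

end Rule73

open Rule73 in
/-- For Wolfram rule 73, the set of periodic points of the SDS map
of any fair update order equals `N_C`, the set of states with no three cyclically
consecutive 1s. -/
theorem stmt_16 {n : ℕ} [NeZero n] (hn : 3 < n)
    (X : Fin n → (Fin n → ZMod 2) → (Fin n → ZMod 2))
    (hX : ∀ (i : Fin n) (y : Fin n → ZMod 2),
      X i y =
        if y (i - 1) = 1 ∧ y (i + 1) = 1 then Function.update y i 0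
        else if y (i - 1) = 0 ∧ y (i + 1) = 0 then Function.update y i (y i + 1)
        else y) :
    ∀ ω : List (Fin n), (∀ i : Fin n, i ∈ ω) →
      {y : Fin n → ZMod 2 | ∃ k : ℕ, 1 ≤ k ∧
          (fun z : Fin n → ZMod 2 => ω.foldl (fun s j => X j s) z)^[k] y = y}
        = {y : Fin n → ZMod 2 |
            ∀ i : Fin n, ¬(y i = 1 ∧ y (i + 1) = 1 ∧ y (i + 2) = 1)} := by
  obtain rfl : X = localMap := funext₂ fun i y => (hX i y).trans (localMap_eq_ite i y).symm
  intro ω hω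
  exact periodicPts_sdsMap (by omega) hω
end

section
/- Fix n > 3. For each i : Fin n let Y_i be the map on states (Fin n → ZMod 2) given by the Wolfram rule 1 local function at i: it replaces y_i by y_i + 1 when y_{i−1} = y_{i+1} = 0, and replaces y_i by 0 otherwise. Then for every fair update order ω, the set of periodic points of the SDS map [Y, ω] = Y_{ω_m} ∘ ⋯ ∘ Y_{ω_1} equals N_A, the set of states with no two cyclically adjacent 1s. -/
/-- For Wolfram rule 1, the set of periodic points of the SDS map
of any fair update order equals `N_A`, the set of states with no two cyclically
adjacent 1s. -/
theorem stmt_17 {n : ℕ} [NeZero n] (hn : 3 < n)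
    (Y : Fin n → (Fin n → ZMod 2) → (Fin n → ZMod 2))
    (hY : ∀ (i : Fin n) (y : Fin n → ZMod 2),
      Y i y =
        if y (i - 1) = 0 ∧ y (i + 1) = 0 then Function.update y i (y i + 1)
        else Function.update y i 0) :
    ∀ ω : List (Fin n), (∀ i : Fin n, i ∈ ω) →
      {y : Fin n → ZMod 2 | ∃ k : ℕ, 1 ≤ k ∧
          (fun z : Fin n → ZMod 2 => ω.foldl (fun s j => Y j s) z)^[k] y = y}
        = {y : Fin n → ZMod 2 | ∀ i : Fin n, ¬(y i = 1 ∧ y (i + 1) = 1)} := by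
  -- basic arithmetic facts
  have hadd : ∀ i : Fin n, i + 1 ≠ i := by
    intro i h
    have h1 : (1 : Fin n) = 0 := by
      have := congrArg (· - i) h
      simpa using this
    rw [Fin.ext_iff, Fin.val_one', Fin.val_zero, Nat.mod_eq_of_lt (by omega)] at h1
    omega
  have hsub : ∀ i : Fin n, i - 1 ≠ i := by
    intro i h
    have h1 : (0 : Fin n) = 1 := by
      have := congrArg (fun x => i - x) h
      simpa using this
    rw [Fin.ext_iff, Fin.val_one', Fin.val_zero, Nat.mod_eq_of_lt (by omega)] at h1
    omega
  have hsubadd : ∀ i : Fin n, i - 1 + 1 = i := fun i => sub_add_cancel i 1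
  have hz2 : ∀ x : ZMod 2, x ≠ 1 → x = 0 := by decide
  have hz0 : ∀ x : ZMod 2, x ≠ 0 → x = 1 := by decide
  have hz2' : ∀ x : ZMod 2, x + 1 + 1 = x := by decide
  -- behavior of Y
  have Yval : ∀ (i : Fin n) (y : Fin n → ZMod 2),
      (Y i y) i = if y (i - 1) = 0 ∧ y (i + 1) = 0 then y i + 1 else 0 := by
    intro i y
    rw [hY]
    split <;> simp
  have Yoth : ∀ (i : Fin n) (y : Fin n → ZMod 2) (j : Fin n), j ≠ i → (Y i y) j = y j := by
    intro i y j hj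
    rw [hY]
    split <;> simp [Function.update_of_ne hj]
  -- the set N_A
  set NA : Set (Fin n → ZMod 2) := {y | ∀ i : Fin n, ¬(y i = 1 ∧ y (i + 1) = 1)} with hNA
  -- Y i maps NA to NA
  have step_mem : ∀ (i : Fin n) (y : Fin n → ZMod 2), y ∈ NA → Y i y ∈ NA := by
    intro i y hy j ⟨hj1, hj2⟩
    by_cases hji : j = i
    · subst hji
      rw [Yval] at hj1
      rw [Yoth j y (j + 1) (hadd j)] at hj2
      split at hj1
      · rename_i hc
        rw [hc.2] at hj2
        exact zero_ne_one hj2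
      · exact zero_ne_one hj1
    · rw [Yoth i y j hji] at hj1
      by_cases hji' : j + 1 = i
      · rw [hji'] at hj2
        rw [Yval] at hj2
        have hj' : j = i - 1 := by rw [← hji']; simp
        split at hj2
        · rename_i hc
          rw [hj', hc.1] at hj1
          exact zero_ne_one hj1
        · exact zero_ne_one hj2
      · rw [Yoth i y (j + 1) hji'] at hj2
        exact hy j ⟨hj1, hj2⟩
  -- Y i is an involution on NA
  have step_inv : ∀ (i : Fin n) (y : Fin n → ZMod 2), y ∈ NA → Y i (Y i y) = y := by
    intro i y hy
    by_cases hc : y (i - 1) = 0 ∧ y (i + 1) = 0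
    · have h1 : Y i y = Function.update y i (y i + 1) := by rw [hY]; simp [hc]
      have hc2 : (Y i y) (i - 1) = 0 ∧ (Y i y) (i + 1) = 0 := by
        rw [Yoth i y _ (hsub i), Yoth i y _ (hadd i)]; exact hc
      rw [hY i (Y i y)]
      simp only [hc2, and_self, if_true]
      funext j
      by_cases hj : j = i
      · subst hj
        rw [Function.update_self, h1, Function.update_self, hz2']
      · rw [Function.update_of_ne hj, Yoth i y j hj]
    · have hyi : y i = 0 := by
        rcases not_and_or.mp hc with h | h
        · have h' := hz0 _ h
          have h2 := hy (i - 1)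
          rw [hsubadd] at h2
          exact hz2 _ fun h1 => h2 ⟨h', h1⟩
        · have h' := hz0 _ h
          exact hz2 _ fun h1 => hy i ⟨h1, h'⟩
      have h1 : Y i y = y := by
        rw [hY]
        simp only [hc, if_false]
        rw [← hyi]
        exact Function.update_eq_self i y
      rw [h1, h1]
  -- the fold
  have fold_mem : ∀ (l : List (Fin n)) (y : Fin n → ZMod 2), y ∈ NA →
      l.foldl (fun s j => Y j s) y ∈ NA := by
    intro l
    induction l with
    | nil => intro y hy; exact hy
    | cons a t ih => intro y hy; exact ih _ (step_mem a y hy)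
  have fold_injOn : ∀ l : List (Fin n),
      Set.InjOn (fun y : Fin n → ZMod 2 => l.foldl (fun s j => Y j s) y) NA := by
    intro l
    induction l with
    | nil => intro a _ b _ h; exact h
    | cons c t ih =>
      intro a ha b hb h
      simp only [List.foldl_cons] at h
      have := ih (step_mem c a ha) (step_mem c b hb) h
      calc a = Y c (Y c a) := (step_inv c a ha).symm
        _ = Y c (Y c b) := by rw [this]
        _ = b := step_inv c b hb
  -- the image lemma: after updating i or i+1 (as the last relevant update), no adjacent 1s
  have himg : ∀ (l : List (Fin n)) (y : Fin n → ZMod 2) (i : Fin n),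
      (i ∈ l ∨ i + 1 ∈ l) →
      ¬(l.foldl (fun s j => Y j s) y i = 1 ∧ l.foldl (fun s j => Y j s) y (i + 1) = 1) := by
    intro l
    induction l using List.reverseRecOn with
    | nil => intro y i h; simp at h
    | append_singleton t j ih =>
      intro y i hmem ⟨h1, h2⟩
      rw [List.foldl_append, List.foldl_cons, List.foldl_nil] at h1 h2
      set z := t.foldl (fun s j => Y j s) y with hz
      by_cases hji : j = i
      · subst hji
        rw [Yval] at h1
        rw [Yoth j z (j + 1) (hadd j)] at h2
        split at h1
        · rename_i hc
          rw [hc.2] at h2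
          exact zero_ne_one h2
        · exact zero_ne_one h1
      · by_cases hji' : j = i + 1
        · subst hji'
          rw [Yval] at h2
          rw [Yoth (i + 1) z i (fun h => hadd i h.symm)] at h1
          split at h2
          · rename_i hc
            rw [add_sub_cancel_right] at hc
            rw [hc.1] at h1
            exact zero_ne_one h1
          · exact zero_ne_one h2
        · rw [Yoth j z i fun h => hji h.symm] at h1
          rw [Yoth j z (i + 1) fun h => hji' h.symm] at h2
          have hmem' : i ∈ t ∨ i + 1 ∈ t := by
            rcases hmem with h | h
            · rcases List.mem_append.mp h with h | h
              · exact Or.inl h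
              · simp at h; exact absurd h.symm hji
            · rcases List.mem_append.mp h with h | h
              · exact Or.inr h
              · simp at h; exact absurd h.symm hji'
          exact ih y i hmem' ⟨h1, h2⟩
  -- main proof
  intro ω hfair
  ext y
  simp only [Set.mem_setOf_eq]
  constructor
  · rintro ⟨k, hk1, hk⟩
    obtain ⟨m, rfl⟩ : ∃ m, k = m + 1 := ⟨k - 1, by omega⟩
    rw [Function.iterate_succ_apply'] at hk
    intro i
    have := himg ω ((fun z : Fin n → ZMod 2 => ω.foldl (fun s j => Y j s) z)^[m] y) i
      (Or.inl (hfair i))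
    rw [hk] at this
    exact this
  · intro hy
    set F : (Fin n → ZMod 2) → (Fin n → ZMod 2) :=
      fun z => ω.foldl (fun s j => Y j s) z with hF
    have hyNA : y ∈ NA := hy
    have hit : ∀ m : ℕ, F^[m] y ∈ NA := by
      intro m
      induction m with
      | zero => exact hyNA
      | succ m ih =>
        rw [Function.iterate_succ_apply']
        exact fold_mem ω _ ih
    have hitg : ∀ (x : Fin n → ZMod 2) (m : ℕ), x ∈ NA → F^[m] x ∈ NA := by
      intro x m hx
      induction m with
      | zero => exact hx
      | succ m ih =>
        rw [Function.iterate_succ_apply']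
        exact fold_mem ω _ ih
    have iter_inj : ∀ m : ℕ, Set.InjOn (F^[m]) NA := by
      intro m
      induction m with
      | zero => intro a _ b _ h; exact h
      | succ m ih =>
        intro a ha b hb h
        rw [Function.iterate_succ_apply', Function.iterate_succ_apply'] at h
        exact ih ha hb (fold_injOn ω (hitg a m ha) (hitg b m hb) h)
    have key : ∀ a b : ℕ, a < b → F^[a] y = F^[b] y →
        ∃ k : ℕ, 1 ≤ k ∧ F^[k] y = y := by
      intro a b hab heq
      obtain ⟨d, rfl⟩ : ∃ d, b = a + d := ⟨b - a, by omega⟩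
      refine ⟨d, by omega, ?_⟩
      rw [Function.iterate_add_apply] at heq
      exact (iter_inj a (hitg y d hyNA) hyNA heq.symm)
    obtain ⟨a, b, hab, heq⟩ := Finite.exists_ne_map_eq_of_infinite (fun m : ℕ => F^[m] y)
    rcases lt_or_gt_of_ne hab with h | h
    · exact key a b h heq
    · exact key b a h heq.symm
end

section
/- For every n ≥ 1, the number of states y : Fin n → ZMod 2 with no two cyclically adjacent 1s (no i with y_i = y_{i+1} = 1, indices mod n) equals fib(n+1) + fib(n−1), the n-th Lucas number. -/
/-!
A cyclic word has no two adjacent 1s iff it is a linear word with no two adjacent 1s whose last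
and first letters are not both 1. Let `W n a b` count the linear such words of length `n + 1`
from `a` to `b`. Prepending a letter gives the transfer-matrix recursion
`W (n+1) 0 b = W n 0 b + W n 1 b`, `W (n+1) 1 b = W n 0 b`, so these counts are Fibonacci numbers.
Summing over the three admissible end-letter pairs of a word of length `m + 1` gives
`F(m+1) + F(m) + F(m) = F(m+2) + F(m)`.
-/
open Finset

section RelWalk

variable {α : Type*} (R : α → α → Prop)

def IsRelWalk {n : ℕ} (y : Fin (n + 1) → α) : Prop :=
  ∀ i : Fin n, R (y i.castSucc) (y i.succ)

instance [DecidableRel R] {n : ℕ} : DecidablePred (IsRelWalk R (n := n)) :=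
  fun _ => inferInstanceAs (Decidable (∀ _, _))

variable {R}

theorem isRelWalk_cons_iff {n : ℕ} (a : α) (z : Fin (n + 1) → α) :
    IsRelWalk R (Fin.cons a z : Fin (n + 2) → α) ↔ R a (z 0) ∧ IsRelWalk R z := by
  simp [IsRelWalk, Fin.forall_fin_succ, ← Fin.succ_castSucc, -Fin.castSucc_succ]

theorem forall_rel_add_one_iff {m : ℕ} (y : Fin (m + 1) → α) :
    (∀ i, R (y i) (y (i + 1))) ↔ IsRelWalk R y ∧ R (y (Fin.last m)) (y 0) := by
  simp [IsRelWalk, Fin.forall_fin_succ', Fin.coeSucc_eq_succ, Fin.last_add_one]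

variable (R) [Fintype α] [DecidableEq α] [DecidableRel R]

def relWalkCount (n : ℕ) (a b : α) : ℕ :=
  #{y : Fin (n + 1) → α | IsRelWalk R y ∧ y 0 = a ∧ y (Fin.last n) = b}

theorem relWalkCount_succ (n : ℕ) (a b : α) :
    relWalkCount R (n + 1) a b = ∑ c ∈ univ with R a c, relWalkCount R n c b := by
  have drop_head : relWalkCount R (n + 1) a b =
      #{z : Fin (n + 1) → α | R a (z 0) ∧ IsRelWalk R z ∧ z (Fin.last n) = b} := by
    refine card_nbij' Fin.tail (fun z => Fin.cons a z) ?_ ?_ ?_ ?_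
    · intro y hy
      simp only [coe_filter, mem_univ, true_and, Set.mem_ofPred_eq] at hy ⊢
      obtain ⟨hy, rfl, rfl⟩ := hy
      rw [← Fin.cons_self_tail y, isRelWalk_cons_iff] at hy
      simpa [Fin.tail, Fin.succ_last] using hy
    · intro z hz
      simp_all [isRelWalk_cons_iff]
    · intro y hy
      simp only [coe_filter, mem_univ, true_and, Set.mem_ofPred_eq] at hy
      simp only [← hy.2.1, Fin.cons_self_tail]
    · intro z _
      simp
  rw [drop_head, card_eq_sum_card_fiberwise (f := fun z => z 0) (t := univ.filter (R a))]
  · refine sum_congr rfl fun c hc => ?_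
    rw [relWalkCount, filter_filter]
    have hc : R a c := (mem_filter.mp hc).2
    refine congrArg card (filter_congr fun z _ => ?_)
    exact ⟨fun ⟨⟨_, hw, hb⟩, h0⟩ => ⟨hw, h0, hb⟩,
      fun ⟨hw, h0, hb⟩ => ⟨⟨h0 ▸ hc, hw, hb⟩, h0⟩⟩
  · intro z hz
    simp_all

theorem card_forall_rel_add_one (m : ℕ) :
    Nat.card {y : Fin (m + 1) → α | ∀ i, R (y i) (y (i + 1))} =
      ∑ a, ∑ b ∈ univ with R b a, relWalkCount R m a b := by
  rw [Nat.card_eq_card_toFinset, Set.toFinset_ofPred]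
  simp_rw [forall_rel_add_one_iff]
  rw [card_eq_sum_card_fiberwise (f := fun y => (y 0, y (Fin.last m)))
    (t := univ.filter fun p => R p.2 p.1)]
  · rw [sum_filter, Fintype.sum_prod_type]
    refine sum_congr rfl fun a _ => ?_
    rw [sum_filter]
    refine sum_congr rfl fun b _ => ?_
    split_ifs with hba
    · rw [relWalkCount, filter_filter]
      refine congrArg card (filter_congr fun y _ => ?_)
      simp only [Prod.ext_iff]
      exact ⟨fun ⟨⟨hw, _⟩, h0, hl⟩ => ⟨hw, h0, hl⟩,
        fun ⟨hw, h0, hl⟩ => ⟨⟨hw, h0 ▸ hl ▸ hba⟩, h0, hl⟩⟩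
    · rfl
  · intro y hy
    simp_all

end RelWalk

theorem Nat.eq_fib_add_of_fib_recurrence {f : ℕ → ℕ} (k : ℕ) (h0 : f 0 = Nat.fib k)
    (h1 : f 1 = Nat.fib (k + 1)) (h : ∀ n, f (n + 2) = f n + f (n + 1)) (n : ℕ) :
    f n = Nat.fib (n + k) := by
  induction n using Nat.twoStepInduction with
  | zero => simpa using h0
  | one => rw [h1, add_comm]
  | more n ih₀ ih₁ =>
    rw [h, ih₀, ih₁, show n + 2 + k = n + k + 2 by omega, Nat.fib_add_two, add_right_comm]

abbrev NotBothOne (x y : ZMod 2) : Prop := ¬(x = 1 ∧ y = 1)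

local notation "W" => relWalkCount NotBothOne

theorem sum_zmod_two (f : ZMod 2 → ℕ) : ∑ c, f c = f 0 + f 1 := by
  rw [show (univ : Finset (ZMod 2)) = {0, 1} by decide, sum_pair (by decide)]

theorem relWalkCount_notBothOne_succ_zero (n : ℕ) (b : ZMod 2) :
    W (n + 1) 0 b = W n 0 b + W n 1 b := by
  rw [relWalkCount_succ, sum_filter, sum_zmod_two]
  simp

theorem relWalkCount_notBothOne_succ_one (n : ℕ) (b : ZMod 2) : W (n + 1) 1 b = W n 0 b := by
  rw [relWalkCount_succ, sum_filter, sum_zmod_two]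
  simp

theorem relWalkCount_notBothOne_zero_add_two (n : ℕ) (b : ZMod 2) :
    W (n + 2) 0 b = W n 0 b + W (n + 1) 0 b := by
  rw [relWalkCount_notBothOne_succ_zero, relWalkCount_notBothOne_succ_one, add_comm]

theorem relWalkCount_notBothOne_zero_zero (n : ℕ) : W n 0 0 = Nat.fib (n + 1) :=
  Nat.eq_fib_add_of_fib_recurrence (f := (W · 0 0)) 1 (by decide) (by decide)
    (relWalkCount_notBothOne_zero_add_two · 0) n

theorem relWalkCount_notBothOne_zero_one (n : ℕ) : W n 0 1 = Nat.fib n :=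
  Nat.eq_fib_add_of_fib_recurrence (f := (W · 0 1)) 0 (by decide) (by decide)
    (relWalkCount_notBothOne_zero_add_two · 1) n

theorem relWalkCount_notBothOne_one_zero : ∀ n : ℕ, W n 1 0 = Nat.fib n
  | 0 => by decide
  | n + 1 => by rw [relWalkCount_notBothOne_succ_one, relWalkCount_notBothOne_zero_zero]

/-- For every `n ≥ 1` (written `n = m + 1`), the number of states
`y : Fin n → ZMod 2` with no two cyclically adjacent 1s equals
`fib (n+1) + fib (n-1)`, the `n`-th Lucas number. -/
theorem stmt_18 :
    ∀ m : ℕ,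
      Nat.card {y : Fin (m + 1) → ZMod 2 |
          ∀ i : Fin (m + 1), ¬(y i = 1 ∧ y (i + 1) = 1)}
        = Nat.fib (m + 2) + Nat.fib m := by
  intro m
  rw [card_forall_rel_add_one NotBothOne m]
  simp [sum_filter, sum_zmod_two, relWalkCount_notBothOne_zero_zero,
    relWalkCount_notBothOne_zero_one, relWalkCount_notBothOne_one_zero, Nat.fib_add_two, add_comm]
end

section
/- For n ≥ 4, let a(n) denote the number of states y : Fin n → ZMod 2 with no three cyclically consecutive 1s (no i with y_i = y_{i+1} = y_{i+2} = 1, indices mod n). Then for every n ≥ 7, the sequence satisfies the recurrence a(n) = a(n−1) + a(n−2) + a(n−3). -/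
/-!
Reading a state `y` through its windows `(y i, y (i + 1))` turns it into a closed walk of length
`n` in the de Bruijn graph on `ZMod 2 × ZMod 2`, where `(a, b) → (b, c)` is an edge unless
`a = b = c = 1`. Closed walks of length `n` are counted by the trace of `T ^ n`, `T` the adjacency
matrix of that graph, and `T ^ 4 = T ^ 3 + T ^ 2 + T`, so the traces obey the recurrence.
-/

section TransferMatrix

variable {V : Type*} (r : V → V → Prop)

def IsWalk {n : ℕ} (g : Fin (n + 1) → V) : Prop :=
  ∀ k : Fin n, r (g k.castSucc) (g k.succ)

abbrev RelWalk (n : ℕ) (u v : V) : Type _ :=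
  {g : Fin (n + 1) → V // g 0 = u ∧ g (Fin.last n) = v ∧ IsWalk r g}

variable {r}

theorem isWalk_cons {n : ℕ} (u : V) (g : Fin (n + 1) → V) :
    IsWalk r (Fin.cons u g : Fin (n + 2) → V) ↔ r u (g 0) ∧ IsWalk r g := by
  simp [IsWalk, Fin.forall_fin_succ]

theorem isWalk_snoc {n : ℕ} (g : Fin (n + 1) → V) (v : V) :
    IsWalk r (Fin.snoc g v : Fin (n + 2) → V) ↔ IsWalk r g ∧ r (g (Fin.last n)) v := by
  simp [IsWalk, Fin.forall_fin_succ', ← Fin.castSucc_succ]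

theorem forall_rel_add_one_iff_s19 {n : ℕ} (f : Fin (n + 1) → V) :
    (∀ i, r (f i) (f (i + 1))) ↔ IsWalk r f ∧ r (f (Fin.last n)) (f 0) := by
  simp [IsWalk, Fin.forall_fin_succ', Fin.coeSucc_eq_succ]

variable (r)

def relWalkSuccEquiv (n : ℕ) (u v : V) :
    RelWalk r (n + 1) u v ≃ Σ w : {w // r u w}, RelWalk r n w v where
  toFun g := ⟨⟨g.1 1, by
      obtain ⟨g, rfl, -, hg⟩ := g
      simpa using hg 0⟩,
    ⟨Fin.tail g.1, rfl, g.2.2.1, fun k => by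
      simpa [Fin.tail, ← Fin.succ_castSucc] using g.2.2.2 k.succ⟩⟩
  invFun p := ⟨Fin.cons u p.2.1, rfl, by simpa using p.2.2.2.1, by
    rw [isWalk_cons, p.2.2.1]
    exact ⟨p.1.2, p.2.2.2.2⟩⟩
  left_inv g := by
    obtain ⟨g, rfl, -⟩ := g
    ext1
    exact Fin.cons_self_tail g
  right_inv := by
    rintro ⟨⟨w, hw⟩, g, hg⟩
    have h0 : g 0 = w := hg.1
    subst h0
    rfl

def cyclicWalkEquivRelWalk (n : ℕ) (u : V) :
    {f : Fin (n + 1) → V // (∀ i, r (f i) (f (i + 1))) ∧ f 0 = u} ≃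
      RelWalk r (n + 1) u u where
  toFun f := ⟨Fin.snoc f.1 u, by simpa using f.2.2, Fin.snoc_last .., by
    obtain ⟨f, hf, rfl⟩ := f
    exact (isWalk_snoc f _).2 ((forall_rel_add_one_iff_s19 f).1 hf)⟩
  invFun g := ⟨Fin.init g.1, by
    obtain ⟨g, hg0, hgl, hg⟩ := g
    rw [← Fin.snoc_init_self g, hgl, isWalk_snoc] at hg
    have h0 : Fin.init g 0 = u := by simpa [Fin.init] using hg0
    exact ⟨(forall_rel_add_one_iff_s19 _).2 (h0 ▸ hg), h0⟩⟩
  left_inv f := Subtype.ext (Fin.init_snoc (α := fun _ => V) ..)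
  right_inv g := by
    obtain ⟨g, -, hgl, -⟩ := g
    ext1
    change Fin.snoc (Fin.init g) u = g
    rw [← hgl, Fin.snoc_init_self]

def relMatrix [DecidableRel r] : Matrix V V ℕ :=
  Matrix.of fun u v => if r u v then 1 else 0

variable [Fintype V] [DecidableEq V] [DecidableRel r]

theorem card_relWalk_eq_pow_apply (n : ℕ) (u v : V) :
    Nat.card (RelWalk r n u v) = (relMatrix r ^ n) u v := by
  induction n generalizing u with
  | zero =>
    rw [pow_zero, Matrix.one_apply]
    split_ifs with h
    · subst h
      have : Unique (RelWalk r 0 u u) :=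
        { default := ⟨fun _ => u, rfl, rfl, Fin.elim0⟩
          uniq := fun g => Subtype.ext (funext fun i => by rw [Fin.fin_one_eq_zero i, g.2.1]) }
      exact Nat.card_unique
    · have : IsEmpty (RelWalk r 0 u v) := ⟨fun g => h (g.2.1.symm.trans g.2.2.1)⟩
      exact Nat.card_of_isEmpty
  | succ n ih =>
    rw [Nat.card_congr (relWalkSuccEquiv r n u v), Nat.card_sigma, pow_succ', Matrix.mul_apply]
    simp only [ih, relMatrix, Matrix.of_apply, ite_mul, one_mul, zero_mul, Finset.sum_ite,
      Finset.sum_const_zero, add_zero]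
    rw [Finset.sum_subtype _ (p := r u) (fun _ => Finset.mem_filter_univ _)]

theorem card_cyclicWalk_eq_trace (n : ℕ) :
    Nat.card {f : Fin (n + 1) → V // ∀ i, r (f i) (f (i + 1))} =
      (relMatrix r ^ (n + 1)).trace := by
  rw [Nat.card_congr (Equiv.sigmaFiberEquiv
      fun f : {f : Fin (n + 1) → V // ∀ i, r (f i) (f (i + 1))} => f.1 0).symm,
    Nat.card_sigma, Matrix.trace]
  refine Finset.sum_congr rfl fun u _ => ?_
  rw [Matrix.diag_apply, ← card_relWalk_eq_pow_apply,
    ← Nat.card_congr (cyclicWalkEquivRelWalk r n u)]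
  exact Nat.card_congr
    (Equiv.subtypeSubtypeEquivSubtypeInter _ fun f : Fin (n + 1) → V => f 0 = u)

end TransferMatrix

theorem Matrix.trace_pow_add_four {n R : Type*} [Fintype n] [DecidableEq n] [Semiring R]
    {A : Matrix n n R} (hA : A ^ 4 = A ^ 3 + A ^ 2 + A) (k : ℕ) :
    (A ^ (k + 4)).trace = (A ^ (k + 3)).trace + (A ^ (k + 2)).trace + (A ^ (k + 1)).trace := by
  rw [pow_add, hA, mul_add, mul_add, ← pow_add, ← pow_add, ← pow_succ, Matrix.trace_add,
    Matrix.trace_add]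

theorem Fin.add_one_add_one {n : ℕ} [NeZero n] (i : Fin n) : i + 1 + 1 = i + 2 := by
  grind

section DeBruijn

variable {α : Type*} (P : α → α → α → Prop)

abbrev DeBruijnRel (s t : α × α) : Prop := s.2 = t.1 ∧ P s.1 s.2 t.2

def windowEquivCyclicWalk (n : ℕ) [NeZero n] :
    {y : Fin n → α // ∀ i, P (y i) (y (i + 1)) (y (i + 2))} ≃
      {f : Fin n → α × α // ∀ i, DeBruijnRel P (f i) (f (i + 1))} where
  toFun y := ⟨fun i => (y.1 i, y.1 (i + 1)), fun i =>
    ⟨rfl, by simpa [Fin.add_one_add_one] using y.2 i⟩⟩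
  invFun f := ⟨fun i => (f.1 i).1, fun i => by
    have h₁ := (f.2 i).1
    have h₂ := (f.2 (i + 1)).1
    rw [Fin.add_one_add_one] at h₂
    simpa [← h₁, ← h₂] using (f.2 i).2⟩
  left_inv y := rfl
  right_inv f := Subtype.ext (funext fun i => Prod.ext rfl (f.2 i).1.symm)

end DeBruijn

abbrev NoThreeOnes (a b c : ZMod 2) : Prop := ¬(a = 1 ∧ b = 1 ∧ c = 1)

def noThreeOnesMatrix : Matrix (ZMod 2 × ZMod 2) (ZMod 2 × ZMod 2) ℕ :=
  relMatrix (DeBruijnRel NoThreeOnes)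

theorem noThreeOnesMatrix_pow_four :
    noThreeOnesMatrix ^ 4 = noThreeOnesMatrix ^ 3 + noThreeOnesMatrix ^ 2 + noThreeOnesMatrix := by
  decide

theorem card_noThreeOnes (m : ℕ) :
    Nat.card {y : Fin (m + 1) → ZMod 2 |
        ∀ i : Fin (m + 1), ¬(y i = 1 ∧ y (i + 1) = 1 ∧ y (i + 2) = 1)} =
      (noThreeOnesMatrix ^ (m + 1)).trace :=
  (Nat.card_congr (windowEquivCyclicWalk NoThreeOnes (m + 1))).trans (card_cyclicWalk_eq_trace _ m)

/-- Let `a m` be the number of states `y : Fin m → ZMod 2` with no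
three cyclically consecutive 1s (specified here for all `m ≥ 1`, hence in
particular for all `m ≥ 4`). Then for every `n ≥ 7`,
`a n = a (n-1) + a (n-2) + a (n-3)`. -/
theorem stmt_19 (a : ℕ → ℕ)
    (ha : ∀ m : ℕ, a (m + 1) =
      Nat.card {y : Fin (m + 1) → ZMod 2 |
        ∀ i : Fin (m + 1), ¬(y i = 1 ∧ y (i + 1) = 1 ∧ y (i + 2) = 1)}) :
    ∀ n : ℕ, 7 ≤ n → a n = a (n - 1) + a (n - 2) + a (n - 3) := by
  intro n hn
  obtain ⟨k, rfl⟩ : ∃ k, n = k + 7 := ⟨n - 7, by omega⟩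
  have ha' (m : ℕ) : a (m + 1) = (noThreeOnesMatrix ^ (m + 1)).trace :=
    (ha m).trans (card_noThreeOnes m)
  change a (k + 6 + 1) = a (k + 5 + 1) + a (k + 4 + 1) + a (k + 3 + 1)
  rw [ha', ha', ha', ha']
  exact Matrix.trace_pow_add_four noThreeOnesMatrix_pow_four (k + 3)
end
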